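/- arXiv:math/9912194 — 6 statements merged into one kernel-verified Lean document; each statement's English description precedes it below -/
import Mathlib

section
/- Let β be a Pisot unit. For ξ ∈ ℝ, one has ξ ∈ P_β if and only if ξ ∈ ℚ(β) and Tr(aξ) ∈ ℤ for every a ∈ ℤ[β]. In other words, P_β is the dual lattice of ℤ[β] with respect to the trace form. -/
/-!
For `x ∈ ℚ(β)`, `Tr(x βⁿ) - x βⁿ` is the sum of `σ(x) σ(β)ⁿ` over the complex embeddings `σ`
other than the identity, and tends to `0` because the other conjugates of `β` lie in the open
unit disc. Hence the trace dual of `ℤ[β]` lies in `P_β`.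

Conversely, let `ξ ∈ P_β` and let `cₙ` be the integer nearest to `ξ βⁿ`. Then `∑ gᵢ c_{n+i}` is an
integer tending to `0`, so from some `N` on `(cₙ)` satisfies the linear recurrence with
characteristic polynomial `g`. Using the dual basis of the power basis, some `w ∈ ℚ(β)` has
`Tr(w βⁿ) = c_{N+n}` for `n < m`, hence for all `n`. So `η = β⁻ᴺ w` has `Tr(η βⁿ) = cₙ` for
`n ≥ N`, whence `(ξ - η) βⁿ → 0` and `ξ = η` as `β > 1`. Finally `η` is in the trace dual of
`ℤ[β]` because `w` is and `β⁻¹ ∈ ℤ[β]`, `β` being a unit.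
-/
open Filter Polynomial

/-- Distance from a real number to the nearest integer. -/
noncomputable def nearestIntDist (y : ℝ) : ℝ := |y - (round y : ℤ)|

/-- `P_β = {ξ ∈ ℝ : ‖ξ βⁿ‖ → 0 as n → +∞}`. -/
def PisotSet (β : ℝ) : Set ℝ :=
  {ξ : ℝ | Filter.Tendsto (fun n : ℕ => nearestIntDist (ξ * β ^ n)) Filter.atTop (nhds 0)}

/-- `β` is a Pisot unit. -/
def IsPisotUnit (β : ℝ) : Prop :=
  1 < β ∧ IsIntegral ℤ β ∧
    (∀ z : ℂ, ((minpoly ℤ β).map (Int.castRingHom ℂ)).IsRoot z → z ≠ (β : ℂ) →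
      ‖z‖ < 1) ∧
    ((minpoly ℤ β).coeff 0 = 1 ∨ (minpoly ℤ β).coeff 0 = -1)

open IntermediateField Topology Finset

section Recurrence

variable {R : Type*} [CommRing R]

def SatisfiesRecurrence (p : R[X]) (s : ℕ → R) : Prop :=
  ∀ n, ∑ i ∈ range (p.natDegree + 1), p.coeff i * s (n + i) = 0

namespace SatisfiesRecurrence

variable {p : R[X]} {s t : ℕ → R}

lemma isSolution (hp : p.Monic) (hs : SatisfiesRecurrence p s) :
    (⟨p.natDegree, fun i => -p.coeff i⟩ : LinearRecurrence R).IsSolution s := by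
  intro n
  have h := hs n
  rw [sum_range_succ, hp.coeff_natDegree, one_mul] at h
  rw [Fin.sum_univ_eq_sum_range (fun i => -p.coeff i * s (n + i))]
  simp only [neg_mul, sum_neg_distrib]
  linear_combination h

lemma eq_of_eqOn (hp : p.Monic) (hs : SatisfiesRecurrence p s) (ht : SatisfiesRecurrence p t)
    (h : ∀ n < p.natDegree, s n = t n) : s = t :=
  (LinearRecurrence.eq_iff_eqOn_range_order _ s t (hs.isSolution hp) (ht.isSolution hp)).2
    fun n hn => h n (mem_range.1 hn)

lemma map {S : Type*} [CommRing S] {f : R →+* S} (hf : Function.Injective f)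
    (hs : SatisfiesRecurrence p s) : SatisfiesRecurrence (p.map f) (f ∘ s) := by
  intro n
  simp only [natDegree_map_eq_of_injective hf, coeff_map, Function.comp_apply, ← map_mul,
    ← map_sum, hs n, map_zero]

end SatisfiesRecurrence

lemma satisfiesRecurrence_apply_mul_pow {A : Type*} [Ring A] [Algebra R A] (φ : A →ₗ[R] R)
    {p : R[X]} {x : A} (hx : aeval x p = 0) (y : A) :
    SatisfiesRecurrence p fun n => φ (y * x ^ n) := by
  intro n
  have h : ∑ i ∈ range (p.natDegree + 1), p.coeff i • (y * x ^ n * x ^ i) = 0 := by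
    simp_rw [← mul_smul_comm, ← mul_sum, ← aeval_eq_sum_range, hx, mul_zero]
  simpa only [pow_add, mul_assoc, map_sum, map_smul, smul_eq_mul, map_zero] using congrArg φ h

end Recurrence

lemma eventually_eq_zero_of_tendsto_intCast {u : ℕ → ℤ}
    (h : Tendsto (fun n => (u n : ℝ)) atTop (𝓝 0)) : ∀ᶠ n in atTop, u n = 0 := by
  rw [← Int.cast_zero, ← Function.comp_def,
    ← Int.isClosedEmbedding_coe_real.isEmbedding.tendsto_nhds_iff, nhds_discrete] at h
  exact tendsto_pure.1 h

lemma exists_satisfiesRecurrence_shift {β ξ : ℝ} {p : ℤ[X]} (hp : aeval β p = 0) {c : ℕ → ℤ}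
    (hc : Tendsto (fun n => ξ * β ^ n - c n) atTop (𝓝 0)) :
    ∃ N, SatisfiesRecurrence p fun n => c (N + n) := by
  have hsum : ∀ n, ((∑ i ∈ range (p.natDegree + 1), p.coeff i * c (n + i) : ℤ) : ℝ) =
      -∑ i ∈ range (p.natDegree + 1), p.coeff i * (ξ * β ^ (n + i) - c (n + i)) := by
    intro n
    have h : ∑ i ∈ range (p.natDegree + 1), (p.coeff i : ℝ) * (ξ * β ^ (n + i)) = 0 := by
      rw [aeval_eq_sum_range] at hp
      simp_rw [zsmul_eq_mul] at hp
      simp_rw [pow_add, mul_left_comm _ ξ, mul_left_comm _ (β ^ n), ← mul_sum, hp, mul_zero]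
    push_cast
    simp only [mul_sub, sum_sub_distrib, h]
    ring
  have hlim : Tendsto (fun n => ((∑ i ∈ range (p.natDegree + 1), p.coeff i * c (n + i) : ℤ) : ℝ))
      atTop (𝓝 0) := by
    simp_rw [hsum]
    simpa using (tendsto_finsetSum _ fun i _ =>
      (hc.comp (tendsto_add_atTop_nat i)).const_mul (p.coeff i : ℝ)).neg
  obtain ⟨N, hN⟩ := eventually_atTop.1 (eventually_eq_zero_of_tendsto_intCast hlim)
  exact ⟨N, fun n => by simpa only [add_assoc] using hN (N + n) le_self_add⟩

section TraceDual

variable {K L : Type*} [Field K] [Field L] [Algebra K L]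

lemma exists_trace_mul_basis_eq [FiniteDimensional K L] [Algebra.IsSeparable K L]
    {ι : Type*} [Fintype ι] [DecidableEq ι] (b : Module.Basis ι K L) (f : ι → K) :
    ∃ w : L, ∀ i, Algebra.trace K L (w * b i) = f i := by
  refine ⟨∑ j, f j • (Algebra.traceForm K L).dualBasis (traceForm_nondegenerate K L) b j,
    fun i => ?_⟩
  have h := fun j =>
    (Algebra.traceForm K L).apply_dualBasis_left (traceForm_nondegenerate K L) b j i
  simp only [Algebra.traceForm_apply] at h
  simp [sum_mul, h]

lemma exists_trace_mul_gen_pow_eq [CharZero K] {x : L} (hx : IsIntegral K x) {s : ℕ → K}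
    (hs : SatisfiesRecurrence (minpoly K x) s) :
    ∃ w : K⟮x⟯, ∀ n, Algebra.trace K K⟮x⟯ (w * AdjoinSimple.gen K x ^ n) = s n := by
  have := adjoin.finiteDimensional hx
  let pb := adjoin.powerBasis hx
  obtain ⟨w, hw⟩ := exists_trace_mul_basis_eq pb.basis fun i => s i
  refine ⟨w, congrFun ((satisfiesRecurrence_apply_mul_pow (Algebra.trace K K⟮x⟯)
    (aeval_gen_minpoly K x) w).eq_of_eqOn (minpoly.monic hx) hs fun n hn => ?_)⟩
  simpa [pb, PowerBasis.coe_basis, adjoin.powerBasis_gen] using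
    hw ⟨n, by rwa [adjoin.powerBasis_dim]⟩

variable (A : Type*) [CommRing A] [Algebra A K] [Algebra A L] [IsScalarTower A K L]

lemma mem_traceDual_adjoin_singleton_iff {α x : L} :
    x ∈ Submodule.traceDual A K (Subalgebra.toSubmodule (Algebra.adjoin A {α})) ↔
      ∀ n : ℕ, Algebra.trace K L (x * α ^ n) ∈ (algebraMap A K).range := by
  rw [Submodule.mem_traceDual]
  refine ⟨fun h n => h _ (pow_mem (Algebra.self_mem_adjoin_singleton A α) n), fun h => ?_⟩
  intro a ha
  rw [Algebra.adjoin_eq_span] at ha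
  induction ha using Submodule.span_induction with
  | mem a ha =>
    obtain ⟨n, rfl⟩ := Submonoid.mem_closure_singleton.1 ha
    exact h n
  | zero => simp
  | add a b _ _ ha hb => simpa only [map_add] using add_mem ha hb
  | smul c a _ ha =>
    obtain ⟨d, hd⟩ := ha
    rw [← algebraMap_smul K c a, map_smul, smul_eq_mul, ← hd, ← map_mul]
    exact ⟨c * d, rfl⟩

lemma mul_mem_traceDual {S : Subalgebra A L} {u x : L} (hu : u ∈ S)
    (hx : x ∈ Submodule.traceDual A K (Subalgebra.toSubmodule S)) :
    u * x ∈ Submodule.traceDual A K (Subalgebra.toSubmodule S) := by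
  rw [Submodule.mem_traceDual] at hx ⊢
  intro a ha
  simpa only [Algebra.traceForm_apply, mul_assoc, mul_left_comm x] using hx _ (S.mul_mem hu ha)

end TraceDual

lemma tendsto_trace_mul_gen_pow_sub {β : ℝ} (hβ : IsIntegral ℚ β)
    (hconj : ∀ z : ℂ, aeval z (minpoly ℚ β) = 0 → z ≠ β → ‖z‖ < 1) (x : ℚ⟮β⟯) :
    Tendsto (fun n : ℕ => (Algebra.trace ℚ ℚ⟮β⟯ (x * AdjoinSimple.gen ℚ β ^ n) : ℝ) - x * β ^ n)
      atTop (𝓝 0) := by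
  classical
  have := adjoin.finiteDimensional hβ
  set g := AdjoinSimple.gen ℚ β
  have hg : aeval g (minpoly ℚ β) = 0 := aeval_gen_minpoly ℚ β
  let σ₀ : ℚ⟮β⟯ →ₐ[ℚ] ℂ := (Complex.ofRealAm.restrictScalars ℚ).comp (IntermediateField.val _)
  have hsmall : ∀ σ ∈ univ.erase σ₀, ‖σ g‖ < 1 := by
    intro σ hσ
    refine hconj _ (by rw [aeval_algHom_apply, hg, map_zero]) fun h => ne_of_mem_erase hσ ?_
    exact (adjoin.powerBasis hβ).algHom_ext (by rw [adjoin.powerBasis_gen]; exact h)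
  have hsplit : ∀ n : ℕ, (((Algebra.trace ℚ ℚ⟮β⟯ (x * g ^ n) : ℝ) - x * β ^ n : ℝ) : ℂ) =
      ∑ σ ∈ univ.erase σ₀, σ x * σ g ^ n := by
    intro n
    have h := trace_eq_sum_embeddings ℂ (K := ℚ) (x := x * g ^ n)
    rw [← add_sum_erase _ _ (mem_univ σ₀)] at h
    simp only [map_mul, map_pow] at h
    push_cast
    rw [sub_eq_iff_eq_add']
    convert h using 2
    · simp
    · rfl
  rw [← tendsto_ofReal_iff, Complex.ofReal_zero]
  simp_rw [hsplit]
  simpa using tendsto_finsetSum _ fun σ hσ =>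
    (tendsto_pow_atTop_nhds_zero_of_norm_lt_one (hsmall σ hσ)).const_mul (σ x)

lemma inv_mem_adjoin_singleton {R L : Type*} [CommRing R] [Field L] [Algebra R L] {α : L}
    {p : R[X]} (hp : aeval α p = 0) (h0 : IsUnit (p.coeff 0)) :
    α⁻¹ ∈ Algebra.adjoin R {α} := by
  obtain ⟨q, hq⟩ := X_dvd_sub_C (p := p)
  obtain ⟨u, hu⟩ := h0
  have hαq : α * aeval α q = -algebraMap R L u := by
    have h := congrArg (aeval α) hq
    simp only [map_sub, aeval_C, hp, map_mul, aeval_X, ← hu] at h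
    linear_combination -h
  have hinv : α⁻¹ = -algebraMap R L ↑u⁻¹ * aeval α q := by
    refine inv_eq_of_mul_eq_one_right ?_
    rw [mul_left_comm, hαq, neg_mul_neg, ← map_mul, Units.inv_mul, map_one]
  rw [hinv]
  exact mul_mem (neg_mem (Subalgebra.algebraMap_mem _ _)) (aeval_mem_adjoin_singleton R α)

lemma eq_zero_of_tendsto_mul_pow {x β : ℝ} (hβ : 1 ≤ β)
    (h : Tendsto (fun n : ℕ => x * β ^ n) atTop (𝓝 0)) : x = 0 := by
  refine abs_nonpos_iff.1 (ge_of_tendsto' (by simpa using h.abs) fun n => ?_)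
  simpa [abs_mul] using
    le_mul_of_one_le_right (abs_nonneg x) (one_le_pow₀ (hβ.trans (le_abs_self β)))

lemma coe_mem_subringClosure_singleton_iff {β : ℝ} {a : ℚ⟮β⟯} :
    (a : ℝ) ∈ Subring.closure {β} ↔ a ∈ Algebra.adjoin ℤ {AdjoinSimple.gen ℚ β} := by
  have hmap :=
    AlgHom.map_adjoin_singleton (IsScalarTower.toAlgHom ℤ ℚ⟮β⟯ ℝ) (AdjoinSimple.gen ℚ β)
  rw [IsScalarTower.coe_toAlgHom', AdjoinSimple.algebraMap_gen] at hmap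
  rw [← mem_subalgebraOfSubring, ← Algebra.adjoin_int, ← hmap, Subalgebra.mem_map]
  exact ⟨fun ⟨b, hb, hba⟩ => (algebraMap ℚ⟮β⟯ ℝ).injective hba ▸ hb, fun ha => ⟨a, ha, rfl⟩⟩

lemma tendsto_sub_round_of_mem_pisotSet {β ξ : ℝ} (hξ : ξ ∈ PisotSet β) :
    Tendsto (fun n : ℕ => ξ * β ^ n - round (ξ * β ^ n)) atTop (𝓝 0) :=
  (tendsto_zero_iff_abs_tendsto_zero _).2 hξ

noncomputable def dualLattice (β : ℝ) : Submodule ℤ ℚ⟮β⟯ :=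
  Submodule.traceDual ℤ ℚ (Subalgebra.toSubmodule (Algebra.adjoin ℤ {AdjoinSimple.gen ℚ β}))

lemma mem_dualLattice_iff {β : ℝ} {x : ℚ⟮β⟯} :
    x ∈ dualLattice β ↔
      ∀ n : ℕ, Algebra.trace ℚ ℚ⟮β⟯ (x * AdjoinSimple.gen ℚ β ^ n) ∈ (algebraMap ℤ ℚ).range :=
  mem_traceDual_adjoin_singleton_iff ℤ

namespace IsPisotUnit

variable {β : ℝ}

lemma isIntegral_rat (hβ : IsPisotUnit β) : IsIntegral ℚ β :=
  hβ.2.1.tower_top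

lemma minpoly_rat (hβ : IsPisotUnit β) : minpoly ℚ β = (minpoly ℤ β).map (algebraMap ℤ ℚ) :=
  minpoly.isIntegrallyClosed_eq_field_fractions' ℚ hβ.2.1

lemma norm_lt_one_of_aeval_eq_zero (hβ : IsPisotUnit β) {z : ℂ}
    (hz : aeval z (minpoly ℚ β) = 0) (hzβ : z ≠ β) : ‖z‖ < 1 := by
  rw [hβ.minpoly_rat, aeval_map_algebraMap] at hz
  exact hβ.2.2.1 z (by rwa [IsRoot.def, eval_map, ← algebraMap_int_eq, ← aeval_def]) hzβ

lemma gen_inv_mem (hβ : IsPisotUnit β) :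
    (AdjoinSimple.gen ℚ β)⁻¹ ∈ Algebra.adjoin ℤ {AdjoinSimple.gen ℚ β} := by
  refine inv_mem_adjoin_singleton (p := minpoly ℤ β) ?_ ?_
  · have h : aeval (algebraMap ℚ⟮β⟯ ℝ (AdjoinSimple.gen ℚ β)) (minpoly ℤ β) = 0 :=
      minpoly.aeval ℤ β
    rw [aeval_algebraMap_apply] at h
    exact (map_eq_zero_iff _ (algebraMap ℚ⟮β⟯ ℝ).injective).1 h
  · rcases hβ.2.2.2 with h | h <;> simp [h]

lemma tendsto_trace_mul_gen_pow_sub (hβ : IsPisotUnit β) (x : ℚ⟮β⟯) :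
    Tendsto (fun n : ℕ => (Algebra.trace ℚ ℚ⟮β⟯ (x * AdjoinSimple.gen ℚ β ^ n) : ℝ) - x * β ^ n)
      atTop (𝓝 0) :=
  _root_.tendsto_trace_mul_gen_pow_sub hβ.isIntegral_rat
    (fun _ => hβ.norm_lt_one_of_aeval_eq_zero) x

lemma coe_mem_pisotSet_of_mem_dualLattice (hβ : IsPisotUnit β) {x : ℚ⟮β⟯}
    (hx : x ∈ dualLattice β) : (x : ℝ) ∈ PisotSet β := by
  refine squeeze_zero (fun n => abs_nonneg _) (fun n => ?_)
    (by simpa using (hβ.tendsto_trace_mul_gen_pow_sub x).abs)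
  obtain ⟨z, hz⟩ := mem_dualLattice_iff.1 hx n
  rw [← hz, abs_sub_comm]
  simpa [nearestIntDist] using round_le ((x : ℝ) * β ^ n) z

lemma exists_trace_mul_gen_pow_eq_round (hβ : IsPisotUnit β) {ξ : ℝ} (hξ : ξ ∈ PisotSet β) :
    ∃ (w : ℚ⟮β⟯) (N : ℕ),
      ∀ n, Algebra.trace ℚ ℚ⟮β⟯ (w * AdjoinSimple.gen ℚ β ^ n) = round (ξ * β ^ (N + n)) := by
  obtain ⟨N, hN⟩ := exists_satisfiesRecurrence_shift (minpoly.aeval ℤ β)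
    (tendsto_sub_round_of_mem_pisotSet hξ)
  have hNℚ := hN.map (RingHom.injective_int (algebraMap ℤ ℚ))
  rw [← hβ.minpoly_rat] at hNℚ
  obtain ⟨w, hw⟩ := exists_trace_mul_gen_pow_eq hβ.isIntegral_rat hNℚ
  exact ⟨w, N, fun n => (hw n).trans (eq_intCast _ _)⟩

lemma exists_mem_dualLattice_coe_eq (hβ : IsPisotUnit β) {ξ : ℝ} (hξ : ξ ∈ PisotSet β) :
    ∃ x ∈ dualLattice β, (x : ℝ) = ξ := by
  obtain ⟨w, N, hw⟩ := hβ.exists_trace_mul_gen_pow_eq_round hξ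
  set g := AdjoinSimple.gen ℚ β
  have hg : g ≠ 0 := fun h => by
    have hβ0 := congrArg (algebraMap ℚ⟮β⟯ ℝ) h
    rw [AdjoinSimple.algebraMap_gen, map_zero] at hβ0
    linarith [hβ.1]
  have hround : ∀ n ≥ N, Algebra.trace ℚ ℚ⟮β⟯ (g⁻¹ ^ N * w * g ^ n) = round (ξ * β ^ n) := by
    intro n hn
    obtain ⟨k, rfl⟩ := Nat.exists_eq_add_of_le hn
    rw [← hw k, pow_add, inv_pow]
    field_simp
  refine ⟨g⁻¹ ^ N * w, mul_mem_traceDual ℤ (pow_mem hβ.gen_inv_mem N)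
    (mem_dualLattice_iff.2 fun n => ⟨_, (hw n).symm⟩), ?_⟩
  refine (sub_eq_zero.1 (eq_zero_of_tendsto_mul_pow hβ.1.le ?_)).symm
  have h := (tendsto_sub_round_of_mem_pisotSet hξ).add
    (hβ.tendsto_trace_mul_gen_pow_sub (g⁻¹ ^ N * w))
  rw [add_zero] at h
  refine h.congr' ?_
  filter_upwards [eventually_ge_atTop N] with n hn
  rw [hround n hn]
  push_cast
  ring

end IsPisotUnit

/-- `ξ ∈ P_β` iff `ξ ∈ ℚ(β)` and `Tr(aξ) ∈ ℤ` for every `a ∈ ℤ[β]`;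
i.e. `P_β` is the dual lattice of `ℤ[β]` with respect to the trace form. -/
theorem pisotSet_eq_dual_lattice (β : ℝ) (hβ : IsPisotUnit β) (ξ : ℝ) :
    ξ ∈ PisotSet β ↔
      ∃ hK : ξ ∈ IntermediateField.adjoin ℚ ({β} : Set ℝ),
        ∀ a : (IntermediateField.adjoin ℚ ({β} : Set ℝ)),
          (a : ℝ) ∈ Subring.closure ({β} : Set ℝ) →
            ∃ n : ℤ, Algebra.trace ℚ (IntermediateField.adjoin ℚ ({β} : Set ℝ))
              (a * ⟨ξ, hK⟩) = (n : ℚ) := by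
  have hdual : ∀ x : ℚ⟮β⟯, x ∈ dualLattice β ↔ ∀ a : ℚ⟮β⟯, (a : ℝ) ∈ Subring.closure {β} →
      ∃ n : ℤ, Algebra.trace ℚ ℚ⟮β⟯ (a * x) = n := by
    intro x
    simp only [dualLattice, Submodule.mem_traceDual, Subalgebra.mem_toSubmodule,
      ← coe_mem_subringClosure_singleton_iff, Algebra.traceForm_apply, mul_comm x,
      RingHom.mem_range, eq_intCast, eq_comm]
  constructor
  · intro hξ
    obtain ⟨x, hx, rfl⟩ := hβ.exists_mem_dualLattice_coe_eq hξ
    exact ⟨x.2, (hdual x).1 hx⟩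
  · rintro ⟨hK, h⟩
    exact hβ.coe_mem_pisotSet_of_mem_dualLattice ((hdual ⟨ξ, hK⟩).2 h)
end

section
/- Let k be a positive integer and ε ∈ {+1, −1}, with k ≥ 1 if ε = +1 and k ≥ 3 if ε = −1. Let β = (k + √(k²+4ε))/2 be the larger root of x² = kx + ε and set D = k² + 4ε. Then the Pisot group A_β = P_β/ℤ[β] is isomorphic to ℤ/Dℤ if k is odd, and isomorphic to (ℤ/(D/2)ℤ) × (ℤ/2ℤ) if k is even. -/
open Filter Polynomial

/-!
Write `β' = k - β` for the conjugate of `β`, so that `β β' = -e`, `|β'| < 1` and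
`2β - k = β - β' = √D`. If `ξ ∈ P_β`, the integers `rₙ` nearest to `ξ βⁿ` eventually satisfy
`rₙ₊₂ = k rₙ₊₁ + e rₙ`, because the defect is an integer tending to `0`; then
`(rₙ₊₁ - β' rₙ) β⁻ⁿ` is eventually constant and tends to `ξ √D`, so `ξ √D ∈ ℤ[β]` as `β` is a
unit. Conversely `(a + bβ) βⁿ / √D` is at distance `|(a + bβ') β'ⁿ / √D|` from an integer. Hence
`P_β = √D⁻¹ ℤ[β]` and `A_β ≅ ℤ[β] / √D ℤ[β]`, which in the basis `1, β` is `ℤ²` modulo the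
lattice spanned by `(-k, 2)` and `(2e, k)`. Its elementary divisors are `1, D` for odd `k` and
`2, D/2` for even `k`.
-/

open Topology

namespace QuadraticPisot

section LinearForm

variable {R : Type*} [CommRing R] {k e : ℤ}

theorem exists_mul_pow_eq_add_mul (k e a b p q : ℤ) (n : ℕ) :
    ∃ c d : ℤ, ∀ x : R, x ^ 2 = k * x + e → (a + b * x) * (p + q * x) ^ n = c + d * x := by
  induction n with
  | zero => exact ⟨a, b, fun x _ => by simp⟩
  | succ n ih =>
    obtain ⟨c, d, h⟩ := ih
    refine ⟨c * p + d * q * e, c * q + d * p + d * q * k, fun x hx => ?_⟩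
    rw [pow_succ, ← mul_assoc, h x hx]
    push_cast
    linear_combination (d * q : R) * hx

theorem mem_closure_singleton_iff {β x : R} (hβ : β ^ 2 = k * β + e) :
    x ∈ Subring.closure {β} ↔ ∃ a b : ℤ, x = a + b * β := by
  refine ⟨fun hx => ?_, ?_⟩
  · induction hx using Subring.closure_induction with
    | mem x hx => exact ⟨0, 1, by simp [Set.mem_singleton_iff.mp hx]⟩
    | zero => exact ⟨0, 0, by simp⟩
    | one => exact ⟨1, 0, by simp⟩
    | add x y _ _ hx hy =>
      obtain ⟨a, b, rfl⟩ := hx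
      obtain ⟨c, d, rfl⟩ := hy
      exact ⟨a + c, b + d, by push_cast; ring⟩
    | neg x _ hx =>
      obtain ⟨a, b, rfl⟩ := hx
      exact ⟨-a, -b, by push_cast; ring⟩
    | mul x y _ _ hx hy =>
      obtain ⟨a, b, rfl⟩ := hx
      obtain ⟨c, d, rfl⟩ := hy
      obtain ⟨u, v, h⟩ := exists_mul_pow_eq_add_mul (R := R) k e a b c d 1
      exact ⟨u, v, by simpa using h β hβ⟩
  · rintro ⟨a, b, rfl⟩
    exact add_mem (intCast_mem _ a) (mul_mem (intCast_mem _ b) (Subring.subset_closure rfl))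

end LinearForm

theorem eventually_eq_zero_of_tendsto_intCast {ι : Type*} {l : Filter ι} {u : ι → ℤ}
    (h : Tendsto (fun i => (u i : ℝ)) l (𝓝 0)) : ∀ᶠ i in l, u i = 0 := by
  have : Tendsto u l (𝓝 0) := by
    rw [Int.isClosedEmbedding_coe_real.tendsto_nhds_iff]
    simpa [Function.comp_def] using h
  simpa [nhds_discrete] using this

theorem nonempty_quotient_addEquiv_of_ker {A Q : Type*} [AddCommGroup A] [AddGroup Q]
    {L : AddSubgroup A} (φ : A →+ Q) (hφ : Function.Surjective φ) (hker : ∀ a, φ a = 0 ↔ a ∈ L) :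
    Nonempty (A ⧸ L ≃+ Q) :=
  ⟨(QuotientAddGroup.quotientAddEquivOfEq (AddSubgroup.ext hker)).symm.trans
    (QuotientAddGroup.quotientKerEquivOfSurjective φ hφ)⟩

theorem nonempty_quotient_addSubgroupOf_addEquiv {A G : Type*} [AddCommGroup A] [AddCommGroup G]
    {f : A →+ G} (hf : Function.Injective f) {P : AddSubgroup G} (hP : f.range = P)
    (H : AddSubgroup G) : Nonempty (P ⧸ H.addSubgroupOf P ≃+ A ⧸ H.comap f) := by
  let E : A ≃+ P := (AddMonoidHom.ofInjective hf).trans (AddEquiv.addSubgroupCongr hP)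
  refine ⟨(QuotientAddGroup.congr _ _ E ?_).symm⟩
  ext x
  obtain ⟨a, rfl⟩ := E.surjective x
  simp [AddSubgroup.mem_addSubgroupOf, E, AddMonoidHom.ofInjective_apply]

section Lattice

variable {k e : ℤ}

/-- Coordinates of `(2β - k) ℤ[β]` in the basis `1, β` of `ℤ[β]`, where `β² = kβ + e`:
`(2β - k)(x + yβ) = (-kx + 2ey) + (2x + ky)β`. -/
def sqrtDiscLattice (k e : ℤ) : AddSubgroup (ℤ × ℤ) :=
  (AddMonoidHom.mk' (fun p : ℤ × ℤ => (-k * p.1 + 2 * e * p.2, 2 * p.1 + k * p.2))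
    fun p q => by simp only [Prod.fst_add, Prod.snd_add, Prod.mk_add_mk]; congr 1 <;> ring).range

theorem mem_sqrtDiscLattice {a b : ℤ} :
    (a, b) ∈ sqrtDiscLattice k e ↔ ∃ x y : ℤ, a = -k * x + 2 * e * y ∧ b = 2 * x + k * y := by
  simp [sqrtDiscLattice, eq_comm]

theorem nonempty_quotient_sqrtDiscLattice_addEquiv_of_odd (hk : Odd k) (hD : 0 ≤ k ^ 2 + 4 * e) :
    Nonempty ((ℤ × ℤ) ⧸ sqrtDiscLattice k e ≃+ ZMod (k ^ 2 + 4 * e).toNat) := by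
  obtain ⟨t, rfl⟩ := hk
  -- `(a, b) ↦ 2a + kb` kills both generators `(-k, 2)` and `(2e, k)` modulo `D = k² + 4e`.
  refine nonempty_quotient_addEquiv_of_ker
    (AddMonoidHom.mk' (fun p : ℤ × ℤ => ((2 * p.1 + (2 * t + 1) * p.2 : ℤ) : ZMod _))
      fun p q => by simp only [Prod.fst_add, Prod.snd_add]; push_cast; ring)
      (fun z => ?_) fun ⟨a, b⟩ => ?_
  · obtain ⟨z, rfl⟩ := ZMod.intCast_surjective z
    exact ⟨(-t * z, z), by simp only [AddMonoidHom.mk'_apply]; congr 1; ring⟩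
  simp only [AddMonoidHom.mk'_apply, ZMod.intCast_zmod_eq_zero_iff_dvd, Int.toNat_of_nonneg hD,
    mem_sqrtDiscLattice]
  constructor
  · rintro ⟨y, hy⟩
    -- `x = (b - k y) / 2`, written without division
    exact ⟨t * ((2 * t + 1) * y - b) - a + 2 * e * y, y, by linear_combination -t * hy,
      by linear_combination hy⟩
  · rintro ⟨x, y, rfl, rfl⟩
    exact ⟨y, by ring⟩

theorem nonempty_quotient_sqrtDiscLattice_addEquiv_of_even (hk : Even k) (hD : 0 ≤ k ^ 2 + 4 * e) :
    Nonempty ((ℤ × ℤ) ⧸ sqrtDiscLattice k e ≃+ (ZMod ((k ^ 2 + 4 * e).toNat / 2) × ZMod 2)) := by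
  obtain ⟨m, rfl⟩ := hk
  have hhalf : (((m + m) ^ 2 + 4 * e).toNat / 2 : ℕ) = (2 * (m ^ 2 + e) : ℤ) := by
    have : (m + m) ^ 2 + 4 * e = 4 * (m ^ 2 + e) := by ring
    omega
  -- `(a, b) ↦ (a + mb, b)` sends the generators `(-2m, 2)` and `(2e, 2m)` to
  -- `(2(m² + e), 0)` and `(0, 0)` modulo `(2(m² + e), 2)`.
  refine nonempty_quotient_addEquiv_of_ker
    (AddMonoidHom.mk' (fun p : ℤ × ℤ => (((p.1 + m * p.2 : ℤ) : ZMod _), ((p.2 : ℤ) : ZMod 2)))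
      fun p q => by
        simp only [Prod.fst_add, Prod.snd_add, Prod.mk_add_mk]; push_cast; congr 1; ring)
      (fun ⟨z, w⟩ => ?_) fun ⟨a, b⟩ => ?_
  · obtain ⟨z, rfl⟩ := ZMod.intCast_surjective z
    obtain ⟨w, rfl⟩ := ZMod.intCast_surjective w
    exact ⟨(z - m * w, w), by simp⟩
  simp only [AddMonoidHom.mk'_apply, Prod.mk_eq_zero, ZMod.intCast_zmod_eq_zero_iff_dvd, hhalf,
    Nat.cast_ofNat, mem_sqrtDiscLattice]
  constructor
  · rintro ⟨⟨y, hy⟩, ⟨z, rfl⟩⟩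
    exact ⟨z - m * y, y, by linear_combination hy, by ring⟩
  · rintro ⟨x, y, rfl, rfl⟩
    exact ⟨⟨y, by ring⟩, ⟨x + m * y, by ring⟩⟩

end Lattice

section Real

variable {k e : ℤ} {β ξ : ℝ}

theorem abs_intCast_eq_one (he : e * e = 1) : |(e : ℝ)| = 1 := by
  exact_mod_cast Int.isUnit_iff_abs_eq.mp (.of_mul_eq_one e he)

theorem irrational_of_sq_eq (hβ : β ^ 2 = k * β + e) (he : e ≠ 0) (hβ' : |k - β| < 1) :
    Irrational β := by
  -- A rational root of the monic `X² - kX - e` is an integer `n`; then `|k - n| < 1` forces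
  -- `k = n`, and `n² = kn + e` gives `e = 0`.
  rintro ⟨q, rfl⟩
  have hq : q ^ 2 = k * q + e := by exact_mod_cast hβ
  have hmonic : (X ^ 2 - C k * X - C e : ℤ[X]).Monic := by monicity!
  obtain ⟨n, hn, -⟩ := exists_integer_of_is_root_of_monic hmonic (r := q) <| by
    simp only [eq_intCast, aeval_sub, map_pow, aeval_X, map_mul, map_intCast]
    linear_combination hq
  rw [algebraMap_int_eq, eq_intCast] at hn
  subst hn
  have hkn : |k - n| < 1 := by exact_mod_cast hβ'
  obtain rfl : k = n := by rw [Int.abs_lt_one_iff, sub_eq_zero] at hkn; exact hkn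
  apply he
  have : ((k : ℚ) : ℝ) ^ 2 = k * (k : ℚ) + e := hβ
  push_cast at this
  exact_mod_cast (by linarith : (e : ℝ) = 0)

theorem intCast_add_mul_inj (hβ : Irrational β) {a b c d : ℤ} :
    (a + b * β : ℝ) = c + d * β ↔ a = c ∧ b = d := by
  refine ⟨fun h => ?_, by rintro ⟨rfl, rfl⟩; rfl⟩
  obtain rfl : b = d := by
    by_contra hbd
    exact (hβ.intCast_mul (sub_ne_zero.mpr hbd)).ne_int (c - a) (by push_cast; linarith)
  exact ⟨by exact_mod_cast (add_right_cancel h), rfl⟩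

theorem nonneg_disc_and_two_lt_add_sqrt (he : e = 1 ∨ e = -1) (hk1 : e = 1 → 1 ≤ k)
    (hk2 : e = -1 → 3 ≤ k) : 0 ≤ k ^ 2 + 4 * e ∧ 2 < k + √(k ^ 2 + 4 * e) := by
  rcases he with rfl | rfl
  · have hk : (1 : ℝ) ≤ k := by exact_mod_cast hk1 rfl
    have : 1 < √((k : ℝ) ^ 2 + 4 * 1) := Real.lt_sqrt_of_sq_lt (by nlinarith)
    exact ⟨by positivity, by push_cast; linarith⟩
  · have hk : 3 ≤ k := hk2 rfl
    have : (3 : ℝ) ≤ k := by exact_mod_cast hk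
    exact ⟨by nlinarith, by push_cast; linarith [Real.sqrt_nonneg ((k : ℝ) ^ 2 + 4 * -1)]⟩

theorem sq_eq_of_eq_half_add_sqrt (hD : 0 ≤ k ^ 2 + 4 * e)
    (hβ : β = (k + √(k ^ 2 + 4 * e)) / 2) : β ^ 2 = k * β + e := by
  have := Real.sq_sqrt (by exact_mod_cast hD : (0 : ℝ) ≤ k ^ 2 + 4 * e)
  subst hβ
  linear_combination this / 4

theorem one_lt_and_abs_sub_lt_one_of_eq_half_add_sqrt (he : e * e = 1) (hD : 0 ≤ k ^ 2 + 4 * e)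
    (h2 : 2 < k + √(k ^ 2 + 4 * e)) (hβ : β = (k + √(k ^ 2 + 4 * e)) / 2) :
    1 < β ∧ |k - β| < 1 := by
  subst hβ
  set s := √(k ^ 2 + 4 * e : ℝ)
  have hprod : (s - k) * (s + k) = 4 * e := by
    linear_combination Real.sq_sqrt (by exact_mod_cast hD : (0 : ℝ) ≤ k ^ 2 + 4 * e)
  have hdiff : |s - k| * (s + k) = 4 := by
    rw [← abs_of_pos (by linarith : 0 < s + k), ← abs_mul, hprod, abs_mul, abs_intCast_eq_one he]
    norm_num
  refine ⟨by linarith, ?_⟩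
  rw [show (k : ℝ) - (k + s) / 2 = -(s - k) / 2 by ring, abs_div, abs_neg, abs_two]
  nlinarith [abs_nonneg (s - k)]

theorem two_mul_sub_pos (hβ1 : 1 < β) (hβ' : |k - β| < 1) : 0 < 2 * β - k := by
  linarith [(abs_lt.mp hβ').2]

theorem mem_pisotSet_iff_tendsto_sub_round :
    ξ ∈ PisotSet β ↔ Tendsto (fun n : ℕ => ξ * β ^ n - round (ξ * β ^ n)) atTop (𝓝 0) :=
  (tendsto_zero_iff_abs_tendsto_zero _).symm

theorem div_mem_pisotSet (hβ : β ^ 2 = k * β + e) (hβ' : |k - β| < 1) (hs : 2 * β - k ≠ 0)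
    (a b : ℤ) : (a + b * β) / (2 * β - k) ∈ PisotSet β := by
  have hβconj : (k - β) ^ 2 = k * (k - β) + e := by linear_combination hβ
  -- `(a + b β) βⁿ = c + d β` and, with the same integers, `(a + b β') β'ⁿ = c + d β'`
  -- for the conjugate `β' = k - β`; so the distance to `d` is the small conjugate term.
  have hclose : ∀ n : ℕ, nearestIntDist ((a + b * β) / (2 * β - k) * β ^ n)
      ≤ |(a + b * (k - β)) / (2 * β - k)| * |k - β| ^ n := by
    intro n
    obtain ⟨c, d, h⟩ := exists_mul_pow_eq_add_mul (R := ℝ) k e a b 0 1 n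
    have h₁ := h β hβ
    have h₂ := h (k - β) hβconj
    simp only [Int.cast_zero, Int.cast_one, zero_add, one_mul] at h₁ h₂
    calc nearestIntDist ((a + b * β) / (2 * β - k) * β ^ n)
        ≤ |(a + b * β) / (2 * β - k) * β ^ n - d| := round_le _ d
      _ = |(a + b * (k - β)) / (2 * β - k) * (k - β) ^ n| := by
        rw [div_mul_eq_mul_div, div_mul_eq_mul_div, h₁, h₂, div_sub' hs]
        congr 2
        ring
      _ = _ := by rw [abs_mul, abs_pow]
  have hlim := (tendsto_pow_atTop_nhds_zero_of_lt_one (abs_nonneg _) hβ').const_mul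
    |(a + b * (k - β)) / (2 * β - k)|
  rw [mul_zero] at hlim
  exact squeeze_zero (fun n => abs_nonneg _) hclose hlim

theorem eventually_round_recurrence (hβ : β ^ 2 = k * β + e) (hξ : ξ ∈ PisotSet β) :
    ∀ᶠ n in atTop, round (ξ * β ^ (n + 2)) =
      k * round (ξ * β ^ (n + 1)) + e * round (ξ * β ^ n) := by
  set ε : ℕ → ℝ := fun n => ξ * β ^ n - round (ξ * β ^ n)
  have hε : Tendsto ε atTop (𝓝 0) := mem_pisotSet_iff_tendsto_sub_round.mp hξ
  have hdefect : ∀ n : ℕ, ((round (ξ * β ^ (n + 2)) - k * round (ξ * β ^ (n + 1))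
      - e * round (ξ * β ^ n) : ℤ) : ℝ) = -(ε (n + 2) - k * ε (n + 1) - e * ε n) := by
    intro n
    push_cast
    linear_combination ξ * β ^ n * hβ
  have hlim : Tendsto (fun n => -(ε (n + 2) - k * ε (n + 1) - e * ε n)) atTop (𝓝 0) := by
    simpa using (((hε.comp (tendsto_add_atTop_nat 2)).sub
      ((hε.comp (tendsto_add_atTop_nat 1)).const_mul (k : ℝ))).sub (hε.const_mul (e : ℝ))).neg
  filter_upwards [eventually_eq_zero_of_tendsto_intCast (hlim.congr fun n => (hdefect n).symm)]
    with n hn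
  linarith

theorem exists_eq_div_of_mem_pisotSet (hβ : β ^ 2 = k * β + e) (he : e * e = 1) (hβ1 : 1 < β)
    (hβ' : |k - β| < 1) (hξ : ξ ∈ PisotSet β) :
    ∃ a b : ℤ, ξ = (a + b * β) / (2 * β - k) := by
  set r : ℕ → ℤ := fun n => round (ξ * β ^ n)
  have heR : (e : ℝ) * e = 1 := by exact_mod_cast he
  obtain ⟨γ, hγ, heγ⟩ : ∃ γ : ℝ, β * γ = 1 ∧ e * γ = β - k :=
    ⟨e * (β - k), by linear_combination e * hβ + heR, by linear_combination (β - k) * heR⟩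
  have hγ_abs : |γ| < 1 := by
    calc |γ| = |e * γ| := by rw [abs_mul, abs_intCast_eq_one he, one_mul]
      _ = |k - β| := by rw [heγ, abs_sub_comm]
      _ < 1 := hβ'
  -- `w n = (r (n + 1) - β' r n) β⁻ⁿ` tends to `ξ (β - β')`, and is eventually constant
  -- because `r` eventually satisfies the recurrence of `βⁿ` and `β'ⁿ`.
  set w : ℕ → ℝ := fun n => (r (n + 1) - (k - β) * r n) * γ ^ n
  have hw_lim : Tendsto w atTop (𝓝 (ξ * (2 * β - k))) := by
    set ε : ℕ → ℝ := fun n => ξ * β ^ n - r n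
    have hε : Tendsto ε atTop (𝓝 0) := mem_pisotSet_iff_tendsto_sub_round.mp hξ
    have hw : ∀ n, w n = ξ * (2 * β - k) - γ ^ n * (ε (n + 1) - (k - β) * ε n) := by
      intro n
      have hpow : β ^ n * γ ^ n = 1 := by rw [← mul_pow, hγ, one_pow]
      simp only [w, ε]
      linear_combination ξ * (2 * β - k) * hpow
    have hsmall := (tendsto_pow_atTop_nhds_zero_of_abs_lt_one hγ_abs).mul
      ((hε.comp (tendsto_add_atTop_nat 1)).sub (hε.const_mul (k - β)))
    refine Tendsto.congr (fun n => (hw n).symm) ?_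
    simpa using (tendsto_const_nhds (x := ξ * (2 * β - k))).sub hsmall
  have hw_const : ∀ᶠ n in atTop, w (n + 1) = w n := by
    filter_upwards [eventually_round_recurrence hβ hξ] with n hn
    simp only [w, r, hn]
    push_cast
    linear_combination γ ^ n * (r (n + 1) * hγ + r n * heγ)
  obtain ⟨N, hN⟩ :=
    eventuallyConst_atTop.mp (eventuallyConst_atTop_nat.mpr (eventually_atTop.mp hw_const))
  have hξw : ξ * (2 * β - k) = w N := tendsto_nhds_unique hw_lim <|
    tendsto_const_nhds.congr' (eventually_atTop.mpr ⟨N, fun n hn => (hN n hn).symm⟩)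
  obtain ⟨c, d, hcd⟩ :=
    exists_mul_pow_eq_add_mul (R := ℝ) k e (r (N + 1) - k * r N) (r N) (-(e * k)) e N
  refine ⟨c, d, ?_⟩
  rw [eq_div_iff (two_mul_sub_pos hβ1 hβ').ne', hξw, ← hcd β hβ]
  have hγ' : γ = -(e * k) + e * β := by linear_combination e * heγ - γ * heR
  simp only [w, hγ']
  push_cast
  ring

noncomputable def pisotCoords (k : ℤ) (β : ℝ) : ℤ × ℤ →+ ℝ :=
  AddMonoidHom.mk' (fun p => (p.1 + p.2 * β) / (2 * β - k)) fun p q => by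
    simp only [Prod.fst_add, Prod.snd_add]; push_cast; ring

theorem pisotCoords_injective (hβ : Irrational β) (hs : 2 * β - k ≠ 0) :
    Function.Injective (pisotCoords k β) := fun p q h => by
  simp only [pisotCoords, AddMonoidHom.mk'_apply, div_left_inj' hs, intCast_add_mul_inj hβ] at h
  exact Prod.ext h.1 h.2

theorem coe_range_pisotCoords (hβ : β ^ 2 = k * β + e) (he : e * e = 1) (hβ1 : 1 < β)
    (hβ' : |k - β| < 1) : ((pisotCoords k β).range : Set ℝ) = PisotSet β := by
  ext ξ
  refine ⟨?_, fun hξ => ?_⟩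
  · rintro ⟨⟨a, b⟩, rfl⟩
    exact div_mem_pisotSet hβ hβ' (two_mul_sub_pos hβ1 hβ').ne' a b
  · obtain ⟨a, b, rfl⟩ := exists_eq_div_of_mem_pisotSet hβ he hβ1 hβ' hξ
    exact ⟨(a, b), rfl⟩

theorem comap_pisotCoords_closure (hβ : β ^ 2 = k * β + e) (hirr : Irrational β)
    (hs : 2 * β - k ≠ 0) :
    (Subring.closure {β}).toAddSubgroup.comap (pisotCoords k β) = sqrtDiscLattice k e := by
  ext ⟨a, b⟩
  simp only [AddSubgroup.mem_comap, Subring.mem_toAddSubgroup, mem_closure_singleton_iff hβ,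
    pisotCoords, AddMonoidHom.mk'_apply, div_eq_iff hs, mem_sqrtDiscLattice]
  refine exists₂_congr fun x y => ?_
  rw [← intCast_add_mul_inj hirr]
  push_cast
  constructor <;> intro h
  · linear_combination h + 2 * y * hβ
  · linear_combination h - 2 * y * hβ

end Real

end QuadraticPisot

open QuadraticPisot

/-- for a quadratic Pisot unit `β = (k + √(k²+4ε))/2` (the larger root of
`x² = kx + ε`, with `k ≥ 1` if `ε = 1`, `k ≥ 3` if `ε = -1`) and `D = k² + 4ε`, the
Pisot group `A_β = P_β/ℤ[β]` is isomorphic to `ℤ/Dℤ` if `k` is odd, and to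
`(ℤ/(D/2)ℤ) × (ℤ/2ℤ)` if `k` is even. -/
theorem quadratic_pisot_group_structure (k e : ℤ) (he : e = 1 ∨ e = -1)
    (hk1 : e = 1 → 1 ≤ k) (hk2 : e = -1 → 3 ≤ k)
    (β : ℝ) (hβ : β = ((k : ℝ) + Real.sqrt ((k : ℝ) ^ 2 + 4 * (e : ℝ))) / 2)
    (P : AddSubgroup ℝ) (hP : (P : Set ℝ) = PisotSet β)
    (Z : AddSubgroup ℝ) (hZ : (Z : Set ℝ) = (Subring.closure ({β} : Set ℝ) : Set ℝ)) :
    (Odd k → Nonempty ((↥P ⧸ Z.addSubgroupOf P) ≃+ ZMod (k ^ 2 + 4 * e).toNat)) ∧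
    (Even k → Nonempty ((↥P ⧸ Z.addSubgroupOf P) ≃+
      (ZMod ((k ^ 2 + 4 * e).toNat / 2) × ZMod 2))) := by
  have he2 : e * e = 1 := by rcases he with rfl | rfl <;> rfl
  obtain ⟨hD, h2⟩ := nonneg_disc_and_two_lt_add_sqrt he hk1 hk2
  have hβsq := sq_eq_of_eq_half_add_sqrt hD hβ
  obtain ⟨hβ1, hβ'⟩ := one_lt_and_abs_sub_lt_one_of_eq_half_add_sqrt he2 hD h2 hβ
  have hs := (two_mul_sub_pos hβ1 hβ').ne'
  have hirr := irrational_of_sq_eq hβsq (left_ne_zero_of_mul_eq_one he2) hβ'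
  have hPrange : (pisotCoords k β).range = P :=
    SetLike.coe_injective ((coe_range_pisotCoords hβsq he2 hβ1 hβ').trans hP.symm)
  have hZcomap : Z.comap (pisotCoords k β) = sqrtDiscLattice k e := by
    rw [← comap_pisotCoords_closure hβsq hirr hs]
    congr 1
    exact SetLike.coe_injective hZ
  obtain ⟨E⟩ := nonempty_quotient_addSubgroupOf_addEquiv (pisotCoords_injective hirr hs) hPrange Z
  rw [hZcomap] at E
  exact ⟨fun hk => (nonempty_quotient_sqrtDiscLattice_addEquiv_of_odd hk hD).map E.trans,
    fun hk => (nonempty_quotient_sqrtDiscLattice_addEquiv_of_even hk hD).map E.trans⟩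
end

section
/- Let β be the real root of x³ = x² + x + 1 (the tribonacci number, a Pisot unit). Then the Pisot group A_β = P_β/ℤ[β] is isomorphic to (ℤ/22ℤ) × (ℤ/2ℤ); in particular its order is 44 = |D(β)|, where D(β) = −44 is the discriminant of x³ − x² − x − 1. -/
/-
Write `F = 3β² - 2β - 1 = f'(β)` for `f = X³ - X² - X - 1`. If `ξβⁿ` is within `o(1)` of
integers `tₙ`, the integers eventually satisfy the tribonacci recurrence, and so does the error
`eₙ = ξβⁿ - tₙ`. Such a real solution tends to `0` exactly when its component along `βⁿ`
vanishes, because the other two characteristic roots are complex conjugates of modulus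
`β^(-1/2) < 1`; that component is read off by applying `f(X) / (X - β)` to the shift. For `eₙ`
it equals `ξF - (t₂ + (β - 1)t₁ + (β² - β - 1)t₀)`, and these expressions in the initial values
of integer tribonacci sequences exhaust `ℤ[β]`; hence `P_β = F⁻¹ ℤ[β]` and
`A_β ≅ ℤ[β] / F ℤ[β]`. In the resulting coordinates of `ℤ[β]`, multiplication by `F` has an
integer matrix of determinant `44` and Smith normal form `diag(1, 2, 22)`.
-/

open Filter Topology

theorem tendsto_nearestIntDist_zero_iff {y : ℕ → ℝ} :
    Tendsto (fun n => nearestIntDist (y n)) atTop (𝓝 0) ↔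
      ∃ t : ℕ → ℤ, Tendsto (fun n => y n - t n) atTop (𝓝 0) := by
  constructor
  · exact fun h => ⟨fun n => round (y n), (tendsto_zero_iff_abs_tendsto_zero _).mpr h⟩
  · rintro ⟨t, ht⟩
    exact squeeze_zero (fun n => abs_nonneg _) (fun n => round_le (y n) (t n))
      ((tendsto_zero_iff_abs_tendsto_zero _).mp ht)

theorem mem_pisotSet_iff_exists_int {β ξ : ℝ} :
    ξ ∈ PisotSet β ↔ ∃ t : ℕ → ℤ, Tendsto (fun n => ξ * β ^ n - t n) atTop (𝓝 0) :=
  tendsto_nearestIntDist_zero_iff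

def pisotAddSubgroup (β : ℝ) : AddSubgroup ℝ where
  carrier := PisotSet β
  zero_mem' := mem_pisotSet_iff_exists_int.mpr ⟨0, by simp⟩
  add_mem' {ξ η} hξ hη := by
    obtain ⟨t, ht⟩ := mem_pisotSet_iff_exists_int.mp hξ
    obtain ⟨u, hu⟩ := mem_pisotSet_iff_exists_int.mp hη
    refine mem_pisotSet_iff_exists_int.mpr ⟨t + u, ?_⟩
    simpa [add_mul, add_sub_add_comm] using ht.add hu
  neg_mem' {ξ} hξ := by
    obtain ⟨t, ht⟩ := mem_pisotSet_iff_exists_int.mp hξ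
    refine mem_pisotSet_iff_exists_int.mpr ⟨-t, ?_⟩
    simpa only [neg_zero] using
      ht.neg.congr fun n => by simp only [Pi.neg_apply, Int.cast_neg]; ring

theorem Int.eventually_eq_zero_of_tendsto_cast {α : Type*} {l : Filter α} {k : α → ℤ}
    (h : Tendsto (fun a => (k a : ℝ)) l (𝓝 0)) : ∀ᶠ a in l, k a = 0 := by
  have : Tendsto k l (𝓝 0) := by
    rw [Int.isClosedEmbedding_coe_real.isEmbedding.tendsto_nhds_iff]
    simpa [Function.comp_def] using h
  rwa [nhds_discrete, tendsto_pure] at this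

/-- `x² + p x y + c y²` is positive definite and gets multiplied by `c` along the recurrence. -/
theorem tendsto_zero_of_second_order_recurrence {p c : ℝ} (hpc : p ^ 2 < 4 * c) (hc : c < 1)
    {u : ℕ → ℝ} (hu : ∀ n, u (n + 2) + p * u (n + 1) + c * u n = 0) :
    Tendsto u atTop (𝓝 0) := by
  set Q : ℕ → ℝ := fun n => u (n + 1) ^ 2 + p * u (n + 1) * u n + c * u n ^ 2 with hQ
  have hQ_succ : ∀ n, Q (n + 1) = c * Q n := fun n => by
    simp only [hQ]
    linear_combination (u (n + 2) - c * u n) * hu n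
  have hQ_eq : ∀ n, Q n = Q 0 * c ^ n := fun n => by
    induction n with
    | zero => simp
    | succ n ih => rw [hQ_succ, ih]; ring
  have hκ : 0 < c - p ^ 2 / 4 := by linarith
  have hQ_ge : ∀ n, (c - p ^ 2 / 4) * u n ^ 2 ≤ Q n := fun n => by
    nlinarith [sq_nonneg (u (n + 1) + p / 2 * u n)]
  have hgeom : Tendsto (fun n => Q 0 / (c - p ^ 2 / 4) * c ^ n) atTop (𝓝 0) := by
    simpa using (tendsto_pow_atTop_nhds_zero_of_lt_one (by nlinarith [sq_nonneg p]) hc).const_mul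
      (Q 0 / (c - p ^ 2 / 4))
  have hsq : Tendsto (fun n => u n ^ 2) atTop (𝓝 0) := by
    refine squeeze_zero (fun n => sq_nonneg _) (fun n => ?_) hgeom
    rw [div_mul_eq_mul_div, le_div_iff₀ hκ, ← hQ_eq]
    linarith [hQ_ge n]
  rw [tendsto_zero_iff_abs_tendsto_zero]
  simpa [Function.comp_def, Real.sqrt_sq_eq_abs] using hsq.sqrt

theorem AddSubgroup.mul_mem_of_mem_closure {A : Type*} [Ring A] {a r x : A} {S : AddSubgroup A}
    (hS : ∀ y ∈ S, a * y ∈ S) (hr : r ∈ Subring.closure {a}) (hx : x ∈ S) : r * x ∈ S := by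
  induction hr using Subring.closure_induction generalizing x with
  | mem b hb => exact (Set.mem_singleton_iff.mp hb) ▸ hS x hx
  | zero => simp
  | one => simpa using hx
  | add b c _ _ hb hc => simpa [add_mul] using S.add_mem (hb hx) (hc hx)
  | neg b _ hb => simpa [neg_mul] using S.neg_mem (hb hx)
  | mul b c _ _ hb hc => simpa [mul_assoc] using hb (hc hx)

theorem eq_zero_of_tribonacci_rec_of_eventually_eq_zero {t : ℕ → ℤ}
    (ht : ∀ n, t (n + 3) = t (n + 2) + t (n + 1) + t n) (h : ∀ᶠ n in atTop, t n = 0) (n : ℕ) :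
    t n = 0 := by
  obtain ⟨N, hN⟩ := eventually_atTop.mp h
  suffices ∀ k n, N ≤ n + k → t n = 0 from this N n (by omega)
  intro k
  induction k with
  | zero => exact hN
  | succ k ih =>
    intro n hn
    have := ht n
    have h1 := ih (n + 1) (by omega)
    have h2 := ih (n + 2) (by omega)
    have h3 := ih (n + 3) (by omega)
    omega

/-- Applies `X² + (β - 1) X + (β² - β - 1) = (X³ - X² - X - 1) / (X - β)` to the shift: on real
solutions of the tribonacci recurrence it kills the components along the two conjugates of `β`
and multiplies the one along `βⁿ` by `3β² - 2β - 1`. -/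
def betaPart (β : ℝ) (s : ℕ → ℝ) : ℝ := s 2 + (β - 1) * s 1 + (β ^ 2 - β - 1) * s 0

theorem betaPart_sub (β : ℝ) (s t : ℕ → ℝ) :
    betaPart β (fun n => s n - t n) = betaPart β s - betaPart β t := by
  simp only [betaPart]; ring

theorem betaPart_mul_pow (β ξ : ℝ) :
    betaPart β (fun n => ξ * β ^ n) = ξ * (3 * β ^ 2 - 2 * β - 1) := by
  simp only [betaPart]; ring

theorem betaPart_intCast_mem_closure (β : ℝ) (t : ℕ → ℤ) :
    betaPart β (fun n => (t n : ℝ)) ∈ Subring.closure {β} := by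
  have hβ : β ∈ Subring.closure {β} := Subring.subset_closure rfl
  exact add_mem (add_mem (intCast_mem _ _) (mul_mem (sub_mem hβ (one_mem _)) (intCast_mem _ _)))
    (mul_mem (sub_mem (sub_mem (pow_mem hβ 2) hβ) (one_mem _)) (intCast_mem _ _))

def tribonacciSeq (v : ℤ × ℤ × ℤ) : ℕ → ℤ
  | 0 => v.1
  | 1 => v.2.1
  | 2 => v.2.2
  | n + 3 => tribonacciSeq v (n + 2) + tribonacciSeq v (n + 1) + tribonacciSeq v n

theorem tribonacciSeq_add_three (v : ℤ × ℤ × ℤ) (n : ℕ) :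
    tribonacciSeq v (n + 3) =
      tribonacciSeq v (n + 2) + tribonacciSeq v (n + 1) + tribonacciSeq v n :=
  rfl

def initBetaPart (β : ℝ) : ℤ × ℤ × ℤ →+ ℝ where
  toFun v := betaPart β (fun n => tribonacciSeq v n)
  map_zero' := by simp [betaPart, tribonacciSeq]
  map_add' v w := by
    simp only [betaPart, tribonacciSeq, Prod.fst_add, Prod.snd_add]; push_cast; ring

theorem initBetaPart_apply (β : ℝ) (a b c : ℤ) :
    initBetaPart β (a, b, c) = c + (β - 1) * b + (β ^ 2 - β - 1) * a :=
  rfl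

section TribonacciRoot

variable {β : ℝ}

theorem tribonacci_root_bounds (hβ : β ^ 3 = β ^ 2 + β + 1) : 5 / 3 < β ∧ β < 2 := by
  constructor <;> nlinarith [sq_nonneg (β - 1), sq_nonneg (β + 1), sq_nonneg (β - 2)]

theorem three_mul_sq_sub_pos (hβ : β ^ 3 = β ^ 2 + β + 1) : 0 < 3 * β ^ 2 - 2 * β - 1 := by
  nlinarith [tribonacci_root_bounds hβ]

theorem pow_add_three_of_tribonacci_root (hβ : β ^ 3 = β ^ 2 + β + 1) (n : ℕ) :
    β ^ (n + 3) = β ^ (n + 2) + β ^ (n + 1) + β ^ n := by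
  linear_combination β ^ n * hβ

theorem betaPart_shift (hβ : β ^ 3 = β ^ 2 + β + 1) {s : ℕ → ℝ}
    (hs : ∀ n, s (n + 3) = s (n + 2) + s (n + 1) + s n) (k : ℕ) :
    betaPart β (fun n => s (n + k)) = β ^ k * betaPart β s := by
  induction k with
  | zero => simp
  | succ k ih =>
    have hk := hs k
    simp only [betaPart, pow_succ] at ih ⊢
    ring_nf at ih hk ⊢
    linear_combination β * ih + hk - s k * hβ

theorem tendsto_zero_iff_betaPart_eq_zero (hβ : β ^ 3 = β ^ 2 + β + 1) {s : ℕ → ℝ}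
    (hs : ∀ n, s (n + 3) = s (n + 2) + s (n + 1) + s n) :
    Tendsto s atTop (𝓝 0) ↔ betaPart β s = 0 := by
  obtain ⟨hβ_gt, hβ_lt⟩ := tribonacci_root_bounds hβ
  constructor
  · intro h
    have hshift : Tendsto (fun k => betaPart β (fun n => s (n + k))) atTop (𝓝 0) := by
      have h1 := (tendsto_add_atTop_iff_nat 1).mpr h
      have h2 := (tendsto_add_atTop_iff_nat 2).mpr h
      simpa [betaPart, add_comm 2, add_comm 1] using
        (h2.add (h1.const_mul (β - 1))).add (h.const_mul (β ^ 2 - β - 1))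
    have hinv : Tendsto (fun k : ℕ => β⁻¹ ^ k) atTop (𝓝 0) :=
      tendsto_pow_atTop_nhds_zero_of_lt_one (by positivity) (inv_lt_one_of_one_lt₀ (by linarith))
    have hconst := hinv.mul hshift
    simp only [betaPart_shift hβ hs, ← mul_assoc, ← mul_pow,
      inv_mul_cancel₀ (by positivity : β ≠ 0), one_pow, one_mul, mul_zero] at hconst
    exact tendsto_const_nhds_iff.mp hconst
  · intro h
    refine tendsto_zero_of_second_order_recurrence (p := β - 1) (c := β ^ 2 - β - 1)
      (by nlinarith) (by nlinarith) fun n => ?_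
    have := betaPart_shift hβ hs n
    rw [h, mul_zero] at this
    simpa only [betaPart, add_comm _ n, add_zero] using this

theorem mul_initBetaPart (hβ : β ^ 3 = β ^ 2 + β + 1) (a b c : ℤ) :
    β * initBetaPart β (a, b, c) = initBetaPart β (b, c, a + b + c) := by
  simp only [initBetaPart_apply]
  push_cast
  linear_combination a * hβ

theorem initBetaPart_mul (hβ : β ^ 3 = β ^ 2 + β + 1) (a b c : ℤ) :
    initBetaPart β (a, b, c) * (3 * β ^ 2 - 2 * β - 1) =
      initBetaPart β (-a - 2 * b + 3 * c, 3 * a + 2 * b + c, a + 4 * b + 3 * c) := by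
  simp only [initBetaPart_apply]
  push_cast
  linear_combination (3 * a * β + 3 * b - 2 * a) * hβ

theorem range_initBetaPart (hβ : β ^ 3 = β ^ 2 + β + 1) :
    Set.range (initBetaPart β) = Subring.closure {β} := by
  refine subset_antisymm ?_ fun x hx => ?_
  · rintro _ ⟨v, rfl⟩
    exact betaPart_intCast_mem_closure β _
  · have hmul : ∀ y ∈ (initBetaPart β).range, β * y ∈ (initBetaPart β).range := by
      rintro _ ⟨⟨a, b, c⟩, rfl⟩
      exact ⟨(b, c, a + b + c), (mul_initBetaPart hβ a b c).symm⟩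
    have h1 : (1 : ℝ) ∈ (initBetaPart β).range := ⟨(0, 0, 1), by simp [initBetaPart_apply]⟩
    simpa using AddSubgroup.mul_mem_of_mem_closure hmul hx h1

theorem initBetaPart_injective (hβ : β ^ 3 = β ^ 2 + β + 1) :
    Function.Injective (initBetaPart β) := by
  refine (injective_iff_map_eq_zero _).mpr fun v hv => ?_
  have hrec := tribonacciSeq_add_three v
  have hlim : Tendsto (fun n => (tribonacciSeq v n : ℝ)) atTop (𝓝 0) :=
    (tendsto_zero_iff_betaPart_eq_zero hβ fun n => by push_cast [hrec n]; rfl).mpr hv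
  have hzero := eq_zero_of_tribonacci_rec_of_eventually_eq_zero hrec
    (Int.eventually_eq_zero_of_tendsto_cast hlim)
  exact Prod.ext (hzero 0) (Prod.ext (hzero 1) (hzero 2))

theorem tendsto_mul_pow_sub_iff (hβ : β ^ 3 = β ^ 2 + β + 1) (ξ : ℝ) {t : ℕ → ℤ}
    (ht : ∀ n, t (n + 3) = t (n + 2) + t (n + 1) + t n) :
    Tendsto (fun n => ξ * β ^ n - t n) atTop (𝓝 0) ↔
      ξ * (3 * β ^ 2 - 2 * β - 1) = betaPart β (fun n => t n) := by
  rw [tendsto_zero_iff_betaPart_eq_zero hβ, betaPart_sub, betaPart_mul_pow, sub_eq_zero]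
  intro n
  push_cast [ht n]
  linear_combination ξ * pow_add_three_of_tribonacci_root hβ n

theorem eventually_rec_of_tendsto_mul_pow_sub (hβ : β ^ 3 = β ^ 2 + β + 1) {ξ : ℝ}
    {t : ℕ → ℤ} (ht : Tendsto (fun n => ξ * β ^ n - t n) atTop (𝓝 0)) :
    ∀ᶠ n in atTop, t (n + 3) = t (n + 2) + t (n + 1) + t n := by
  have hdiff :
      Tendsto (fun n => ((t (n + 3) - t (n + 2) - t (n + 1) - t n : ℤ) : ℝ)) atTop (𝓝 0) := by
    have h : ∀ k, Tendsto (fun n => ξ * β ^ (n + k) - t (n + k)) atTop (𝓝 0) := fun k =>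
      (tendsto_add_atTop_iff_nat k).mpr ht
    convert (((h 2).add (h 1)).add (h 0)).sub (h 3) using 1
    · ext n
      push_cast
      linear_combination ξ * pow_add_three_of_tribonacci_root hβ n
    · simp
  filter_upwards [Int.eventually_eq_zero_of_tendsto_cast hdiff] with n hn
  omega

theorem mul_mem_closure_of_mem_pisotSet (hβ : β ^ 3 = β ^ 2 + β + 1) {ξ : ℝ}
    (hξ : ξ ∈ PisotSet β) : ξ * (3 * β ^ 2 - 2 * β - 1) ∈ Subring.closure {β} := by
  obtain ⟨t, ht⟩ := mem_pisotSet_iff_exists_int.mp hξ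
  obtain ⟨N, hN⟩ := eventually_atTop.mp (eventually_rec_of_tendsto_mul_pow_sub hβ ht)
  have hshift : ξ * β ^ N * (3 * β ^ 2 - 2 * β - 1) = betaPart β (fun n => t (n + N)) := by
    refine (tendsto_mul_pow_sub_iff hβ _ fun n => ?_).mp ?_
    · simpa only [add_right_comm _ N] using hN (n + N) (Nat.le_add_left N n)
    · simpa [pow_add, mul_assoc, mul_comm] using (tendsto_add_atTop_iff_nat N).mpr ht
  have hunit : (β ^ 2 - β - 1) * β = 1 := by linear_combination hβ
  have hβ_mem : β ∈ Subring.closure {β} := Subring.subset_closure rfl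
  have h : ξ * (3 * β ^ 2 - 2 * β - 1) =
      (β ^ 2 - β - 1) ^ N * (ξ * β ^ N * (3 * β ^ 2 - 2 * β - 1)) := by
    rw [show (β ^ 2 - β - 1) ^ N * (ξ * β ^ N * (3 * β ^ 2 - 2 * β - 1)) =
      ((β ^ 2 - β - 1) * β) ^ N * (ξ * (3 * β ^ 2 - 2 * β - 1)) by rw [mul_pow]; ring,
      hunit, one_pow, one_mul]
  rw [h, hshift]
  exact mul_mem (pow_mem (sub_mem (sub_mem (pow_mem hβ_mem 2) hβ_mem) (one_mem _)) N)
    (betaPart_intCast_mem_closure β _)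

theorem mem_pisotSet_iff (hβ : β ^ 3 = β ^ 2 + β + 1) {ξ : ℝ} :
    ξ ∈ PisotSet β ↔ ξ * (3 * β ^ 2 - 2 * β - 1) ∈ Subring.closure {β} := by
  refine ⟨mul_mem_closure_of_mem_pisotSet hβ, fun h => ?_⟩
  rw [← SetLike.mem_coe, ← range_initBetaPart hβ] at h
  obtain ⟨v, hv⟩ := h
  exact mem_pisotSet_iff_exists_int.mpr
    ⟨tribonacciSeq v, (tendsto_mul_pow_sub_iff hβ ξ (tribonacciSeq_add_three v)).mpr hv.symm⟩

end TribonacciRoot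

def derivCoker : ℤ × ℤ × ℤ →+ ZMod 22 × ZMod 2 where
  toFun v := (((5 * v.1 + v.2.1 + 2 * v.2.2 : ℤ) : ZMod 22), ((v.2.1 + v.2.2 : ℤ) : ZMod 2))
  map_zero' := by simp
  map_add' v w := by
    simp only [Prod.fst_add, Prod.snd_add, Prod.mk_add_mk]
    push_cast
    ring_nf

theorem derivCoker_surjective : Function.Surjective derivCoker := by
  rintro ⟨p, q⟩
  obtain ⟨x, rfl⟩ := ZMod.intCast_surjective p
  obtain ⟨y, rfl⟩ := ZMod.intCast_surjective q
  exact ⟨(0, 2 * y - x, x - y),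
    Prod.ext (congrArg Int.cast (by ring)) (congrArg Int.cast (by ring))⟩

/-- The triple on the right is the matrix of multiplication by `3β² - 2β - 1` in the coordinates
of `initBetaPart` (see `initBetaPart_mul`); its Smith normal form is `diag(1, 2, 22)`. -/
theorem derivCoker_eq_zero_iff (x y z : ℤ) :
    derivCoker (x, y, z) = 0 ↔
      ∃ a b c : ℤ, (-a - 2 * b + 3 * c, 3 * a + 2 * b + c, a + 4 * b + 3 * c) = (x, y, z) := by
  simp only [derivCoker, AddMonoidHom.coe_mk, ZeroHom.coe_mk, Prod.mk_eq_zero,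
    ZMod.intCast_zmod_eq_zero_iff_dvd, Prod.mk.injEq]
  constructor
  · rintro ⟨⟨k, hk⟩, ⟨m, hm⟩⟩
    exact ⟨3 * x - 13 * k + 2 * m, -2 * x + 8 * k - m, k, by omega, by omega, by omega⟩
  · rintro ⟨a, b, c, rfl, rfl, rfl⟩
    exact ⟨⟨c, by push_cast; ring⟩, ⟨2 * a + 3 * b + 2 * c, by push_cast; ring⟩⟩

abbrev PisotGroup (β : ℝ) : Type :=
  pisotAddSubgroup β ⧸ (Subring.closure {β}).toAddSubgroup.addSubgroupOf (pisotAddSubgroup β)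

section TribonacciPisotGroup

variable {β : ℝ}

noncomputable def pisotOfInit (hβ : β ^ 3 = β ^ 2 + β + 1) : ℤ × ℤ × ℤ →+ pisotAddSubgroup β :=
  ((AddMonoidHom.mulRight (3 * β ^ 2 - 2 * β - 1)⁻¹).comp (initBetaPart β)).codRestrict _
    fun v => by
      change _ ∈ PisotSet β
      rw [mem_pisotSet_iff hβ, AddMonoidHom.comp_apply, AddMonoidHom.coe_mulRight,
        inv_mul_cancel_right₀ (three_mul_sq_sub_pos hβ).ne', ← SetLike.mem_coe,
        ← range_initBetaPart hβ]
      exact ⟨v, rfl⟩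

theorem coe_pisotOfInit_mul (hβ : β ^ 3 = β ^ 2 + β + 1) (v : ℤ × ℤ × ℤ) :
    (pisotOfInit hβ v : ℝ) * (3 * β ^ 2 - 2 * β - 1) = initBetaPart β v :=
  inv_mul_cancel_right₀ (three_mul_sq_sub_pos hβ).ne' _

theorem pisotOfInit_surjective (hβ : β ^ 3 = β ^ 2 + β + 1) :
    Function.Surjective (pisotOfInit hβ) := by
  rintro ⟨ξ, hξ⟩
  have h := (mem_pisotSet_iff hβ).mp hξ
  rw [← SetLike.mem_coe, ← range_initBetaPart hβ] at h
  obtain ⟨v, hv⟩ := h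
  refine ⟨v, Subtype.ext (mul_right_cancel₀ (three_mul_sq_sub_pos hβ).ne' ?_)⟩
  rw [coe_pisotOfInit_mul, hv]

theorem pisotOfInit_mem_closure_iff (hβ : β ^ 3 = β ^ 2 + β + 1) (v : ℤ × ℤ × ℤ) :
    (pisotOfInit hβ v : ℝ) ∈ Subring.closure {β} ↔ derivCoker v = 0 := by
  obtain ⟨x, y, z⟩ := v
  rw [derivCoker_eq_zero_iff, ← SetLike.mem_coe, ← range_initBetaPart hβ]
  constructor
  · rintro ⟨⟨a, b, c⟩, h⟩
    refine ⟨a, b, c, initBetaPart_injective hβ ?_⟩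
    rw [← initBetaPart_mul hβ, h, coe_pisotOfInit_mul]
  · rintro ⟨a, b, c, h⟩
    refine ⟨(a, b, c), mul_right_cancel₀ (three_mul_sq_sub_pos hβ).ne' ?_⟩
    rw [initBetaPart_mul hβ, h, coe_pisotOfInit_mul]

noncomputable def pisotGroupEquiv (hβ : β ^ 3 = β ^ 2 + β + 1) :
    PisotGroup β ≃+ ZMod 22 × ZMod 2 :=
  let Φ := (QuotientAddGroup.mk' _).comp (pisotOfInit hβ)
  have hΦ : Function.Surjective Φ :=
    (QuotientAddGroup.mk'_surjective _).comp (pisotOfInit_surjective hβ)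
  have hker : Φ.ker = derivCoker.ker := by
    ext v
    simp [Φ, AddSubgroup.mem_addSubgroupOf, pisotOfInit_mem_closure_iff]
  (QuotientAddGroup.quotientKerEquivOfSurjective Φ hΦ).symm.trans <|
    (QuotientAddGroup.quotientAddEquivOfEq hker).trans <|
      QuotientAddGroup.quotientKerEquivOfSurjective _ derivCoker_surjective

end TribonacciPisotGroup

/-- for the tribonacci number `β` (the real root of `x³ = x² + x + 1`),
the Pisot group `A_β = P_β/ℤ[β]` is isomorphic to `(ℤ/22ℤ) × (ℤ/2ℤ)`; in particular
its order is `44 = |D(β)|`. -/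
theorem tribonacci_pisot_group (β : ℝ) (hβ : β ^ 3 = β ^ 2 + β + 1)
    (P : AddSubgroup ℝ) (hP : (P : Set ℝ) = PisotSet β)
    (Z : AddSubgroup ℝ) (hZ : (Z : Set ℝ) = (Subring.closure ({β} : Set ℝ) : Set ℝ)) :
    Nonempty ((↥P ⧸ Z.addSubgroupOf P) ≃+ (ZMod 22 × ZMod 2)) ∧
    Nat.card (↥P ⧸ Z.addSubgroupOf P) = 44 := by
  obtain rfl : P = pisotAddSubgroup β := SetLike.coe_injective hP
  obtain rfl : Z = (Subring.closure {β}).toAddSubgroup := SetLike.coe_injective hZ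
  refine ⟨⟨pisotGroupEquiv hβ⟩, ?_⟩
  rw [Nat.card_congr (pisotGroupEquiv hβ).toEquiv, Nat.card_prod, Nat.card_zmod, Nat.card_zmod]
end

section
/- Let β be the real root of x³ = x + 1 (the smallest Pisot number, a Pisot unit). Then the Pisot group A_β = P_β/ℤ[β] is cyclic of order 23, i.e. isomorphic to ℤ/23ℤ; here 23 = |D(β)| where D(β) = −23 is the discriminant of x³ − x − 1. -/
open Filter Polynomial

/-!
If `ξ ∈ P_β`, the nearest integers to `ξβⁿ` eventually satisfy the Padovan recurrence
`aₙ₊₃ = aₙ₊₁ + aₙ` of `β`. The conjugates of `β` have modulus `β^{-1/2} < 1`, so a real solution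
of this recurrence tends to `0` iff its component along `βⁿ` vanishes. Hence `P_β` is the image of
`ℤ³` under `u ↦ (u₂ + βu₁ + (β² - 1)u₀) / f'(β)`, the element whose traces `Tr ξβⁱ` are the `uᵢ`:
`P_β` is the trace dual of `ℤ[β]`. In these coordinates `ℤ[β]` is the image of the trace form,
whose determinant is the discriminant `-23` of `f = x³ - x - 1`, so the quotient is `ℤ/23`.
-/

open Topology

namespace SmallestPisot

lemma nearestIntDist_le (x : ℝ) (m : ℤ) : nearestIntDist x ≤ |x - m| := round_le x m

def IsPadovan {R : Type*} [Add R] (s : ℕ → R) : Prop := ∀ n, s (n + 3) = s (n + 1) + s n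

section IsPadovan

variable {R : Type*} [AddCommGroup R] {s t : ℕ → R}

lemma IsPadovan.sub (hs : IsPadovan s) (ht : IsPadovan t) : IsPadovan (s - t) := fun n => by
  simp only [Pi.sub_apply, hs n, ht n]; abel

end IsPadovan

def padovanSeq (u : ℤ × ℤ × ℤ) : ℕ → ℤ
  | 0 => u.1
  | 1 => u.2.1
  | 2 => u.2.2
  | n + 3 => padovanSeq u (n + 1) + padovanSeq u n

lemma isPadovan_padovanSeq (u : ℤ × ℤ × ℤ) : IsPadovan (fun n => (padovanSeq u n : ℝ)) :=
  fun n => by simp only [padovanSeq, Int.cast_add]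

variable {β : ℝ}

lemma isPadovan_mul_pow (hβ : β ^ 3 = β + 1) (c : ℝ) : IsPadovan (fun n => c * β ^ n) :=
  fun n => by linear_combination c * β ^ n * hβ

lemma one_lt_of_pow_three_eq (hβ : β ^ 3 = β + 1) : 1 < β := by
  nlinarith [sq_nonneg (β - 1), sq_nonneg (β + 1), sq_nonneg (β ^ 2 - 1)]

/-- Kills the components of a Padovan sequence along the conjugates of `β`, since
`x³ - x - 1 = (x - β)(x² + βx + β² - 1)`. -/
def dominantPart (β : ℝ) (s : ℕ → ℝ) (n : ℕ) : ℝ := s (n + 2) + β * s (n + 1) + (β ^ 2 - 1) * s n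

lemma IsPadovan.dominantPart_eq (hβ : β ^ 3 = β + 1) {s : ℕ → ℝ} (hs : IsPadovan s) (n : ℕ) :
    dominantPart β s n = β ^ n * dominantPart β s 0 := by
  induction n with
  | zero => simp
  | succ n ih =>
    have hstep : dominantPart β s (n + 1) = β * dominantPart β s n := by
      simp only [dominantPart, hs n]
      linear_combination (-s n) * hβ
    rw [hstep, ih]; ring

lemma tendsto_zero_of_dominantPart_eq_zero (hβ : β ^ 3 = β + 1) {s : ℕ → ℝ}
    (h : ∀ n, dominantPart β s n = 0) : Tendsto s atTop (𝓝 0) := by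
  have hβ1 := one_lt_of_pow_three_eq hβ
  -- the norm form `(y - αx)(y - ᾱx)` of the conjugates `α, ᾱ` of `β` at consecutive terms;
  -- it contracts by `|α|² = β² - 1 = β⁻¹ < 1`
  let V : ℕ → ℝ := fun n => s (n + 1) ^ 2 + β * s (n + 1) * s n + (β ^ 2 - 1) * s n ^ 2
  have hV : ∀ n, V n = (β ^ 2 - 1) ^ n * V 0 := by
    intro n
    induction n with
    | zero => simp
    | succ n ih =>
      have hrec : s (n + 2) = -β * s (n + 1) - (β ^ 2 - 1) * s n := by
        have hn : s (n + 2) + β * s (n + 1) + (β ^ 2 - 1) * s n = 0 := h n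
        linear_combination hn
      rw [pow_succ, mul_comm _ (β ^ 2 - 1), mul_assoc, ← ih]
      simp only [V, hrec]
      ring
  have hpos : 0 < β ^ 2 - 1 := by nlinarith
  have hlt : β ^ 2 - 1 < 1 := by nlinarith
  have hV0 : Tendsto V atTop (𝓝 0) := by
    have := (tendsto_pow_atTop_nhds_zero_of_lt_one hpos.le hlt).mul_const (V 0)
    rw [zero_mul] at this
    exact this.congr fun n => (hV n).symm
  have hc : 0 < 3 * β ^ 2 - 4 := by nlinarith
  have hsq : Tendsto (fun n => s n ^ 2) atTop (𝓝 0) := by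
    refine squeeze_zero (fun n => sq_nonneg _) (fun n => ?_)
      (by simpa using hV0.const_mul (4 / (3 * β ^ 2 - 4)))
    rw [div_mul_eq_mul_div, le_div_iff₀ hc]
    nlinarith [sq_nonneg (2 * s (n + 1) + β * s n)]
  have habs := (Real.continuous_sqrt.tendsto 0).comp hsq
  simp only [Function.comp_def, Real.sqrt_sq_eq_abs, Real.sqrt_zero] at habs
  exact (tendsto_zero_iff_abs_tendsto_zero s).mpr habs

lemma IsPadovan.dominantPart_zero_eq_zero (hβ : β ^ 3 = β + 1) {s : ℕ → ℝ} (hs : IsPadovan s)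
    (h : Tendsto s atTop (𝓝 0)) : dominantPart β s 0 = 0 := by
  have hd : Tendsto (dominantPart β s) atTop (𝓝 0) := by
    show Tendsto (fun n => s (n + 2) + β * s (n + 1) + (β ^ 2 - 1) * s n) atTop (𝓝 0)
    simpa using ((h.comp (tendsto_add_atTop_nat 2)).add
      ((h.comp (tendsto_add_atTop_nat 1)).const_mul β)).add (h.const_mul (β ^ 2 - 1))
  have hβ1 := one_lt_of_pow_three_eq hβ
  have hle : ∀ n, |dominantPart β s 0| ≤ |dominantPart β s n| := fun n => by
    rw [hs.dominantPart_eq hβ n, abs_mul, abs_of_pos (pow_pos (zero_lt_one.trans hβ1) n)]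
    exact le_mul_of_one_le_left (abs_nonneg _) (one_le_pow₀ hβ1.le)
  have h0 : |dominantPart β s 0| ≤ 0 := by simpa using ge_of_tendsto' hd.abs hle
  exact abs_eq_zero.mp (le_antisymm h0 (abs_nonneg _))

lemma three_mul_sq_sub_one_ne_zero (hβ : β ^ 3 = β + 1) : 3 * β ^ 2 - 1 ≠ 0 := by
  nlinarith [one_lt_of_pow_three_eq hβ]

/-- The element `ξ` of `ℚ(β)` with `Tr ξ = u₀`, `Tr ξβ = u₁`, `Tr ξβ² = u₂`: dividing by
`f'(β) = 3β² - 1` is Euler's formula for the trace dual basis of `1, β, β²`. -/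
noncomputable def ofTraces (β : ℝ) : ℤ × ℤ × ℤ →+ ℝ :=
  AddMonoidHom.mk' (fun u => (u.2.2 + β * u.2.1 + (β ^ 2 - 1) * u.1) / (3 * β ^ 2 - 1))
    fun u v => by simp only [Prod.fst_add, Prod.snd_add, Int.cast_add]; ring

lemma mul_ofTraces (hβ : β ^ 3 = β + 1) (u : ℤ × ℤ × ℤ) :
    (3 * β ^ 2 - 1) * ofTraces β u = u.2.2 + β * u.2.1 + (β ^ 2 - 1) * u.1 :=
  mul_div_cancel₀ _ (three_mul_sq_sub_one_ne_zero hβ)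

lemma ofTraces_mem_pisotSet (hβ : β ^ 3 = β + 1) (u : ℤ × ℤ × ℤ) : ofTraces β u ∈ PisotSet β := by
  set s : ℕ → ℝ := fun n => padovanSeq u n - ofTraces β u * β ^ n
  have hs : IsPadovan s := (isPadovan_padovanSeq u).sub (isPadovan_mul_pow hβ _)
  have hs0 : dominantPart β s 0 = 0 := by
    simp only [dominantPart, s, padovanSeq]
    linear_combination (-1) * mul_ofTraces hβ u
  have hlim := tendsto_zero_of_dominantPart_eq_zero hβ fun n => by
    rw [hs.dominantPart_eq hβ, hs0, mul_zero]
  refine squeeze_zero (fun n => abs_nonneg _) (fun n => ?_)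
    ((tendsto_zero_iff_abs_tendsto_zero s).mp hlim)
  exact (nearestIntDist_le _ (padovanSeq u n)).trans_eq (abs_sub_comm _ _)

lemma eventually_eq_zero_of_tendsto_intCast {d : ℕ → ℤ}
    (h : Tendsto (fun n => (d n : ℝ)) atTop (𝓝 0)) : ∀ᶠ n in atTop, d n = 0 := by
  rw [← Int.cast_zero, ← Function.comp_def,
    ← Int.isClosedEmbedding_coe_real.isInducing.tendsto_nhds_iff, nhds_discrete, tendsto_pure] at h
  exact h

lemma tendsto_round_sub_of_mem_pisotSet {ξ : ℝ} (hξ : ξ ∈ PisotSet β) :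
    Tendsto (fun n => (round (ξ * β ^ n) : ℝ) - ξ * β ^ n) atTop (𝓝 0) := by
  rw [tendsto_zero_iff_abs_tendsto_zero]
  exact hξ.congr fun n => abs_sub_comm _ _

lemma exists_isPadovan_round (hβ : β ^ 3 = β + 1) {ξ : ℝ} (hξ : ξ ∈ PisotSet β) :
    ∃ N, IsPadovan (fun n => (round (ξ * β ^ (n + N)) : ℝ)) := by
  set a : ℕ → ℤ := fun n => round (ξ * β ^ n)
  have hε := tendsto_round_sub_of_mem_pisotSet hξ
  have hdefect : Tendsto (fun n => ((a (n + 3) - a (n + 1) - a n : ℤ) : ℝ)) atTop (𝓝 0) := by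
    have h := ((hε.comp (tendsto_add_atTop_nat 3)).sub (hε.comp (tendsto_add_atTop_nat 1))).sub hε
    simp only [sub_self] at h
    refine h.congr fun n => ?_
    simp only [Function.comp_apply, Int.cast_sub]
    linear_combination (-1) * isPadovan_mul_pow hβ ξ n
  obtain ⟨N, hN⟩ := eventually_atTop.mp (eventually_eq_zero_of_tendsto_intCast hdefect)
  refine ⟨N, fun n => ?_⟩
  have h := hN (n + N) (Nat.le_add_left N n)
  show (a (n + 3 + N) : ℝ) = a (n + 1 + N) + a (n + N)
  rw [show n + 3 + N = n + N + 3 by ring, show n + 1 + N = n + N + 1 by ring]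
  exact_mod_cast (by linear_combination h : a (n + N + 3) = a (n + N + 1) + a (n + N))

lemma exists_ofTraces_eq_mul_pow (hβ : β ^ 3 = β + 1) {ξ : ℝ} (hξ : ξ ∈ PisotSet β) :
    ∃ N u, ofTraces β u = ξ * β ^ N := by
  obtain ⟨N, ha⟩ := exists_isPadovan_round hβ hξ
  set a : ℕ → ℤ := fun n => round (ξ * β ^ n)
  have hlim : Tendsto (fun n => (a (n + N) : ℝ) - ξ * β ^ N * β ^ n) atTop (𝓝 0) :=
    ((tendsto_round_sub_of_mem_pisotSet hξ).comp (tendsto_add_atTop_nat N)).congr fun n => by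
      simp only [Function.comp_apply, a]; ring
  have h0 := (ha.sub (isPadovan_mul_pow hβ (ξ * β ^ N))).dominantPart_zero_eq_zero hβ hlim
  refine ⟨N, (a N, a (N + 1), a (N + 2)), mul_left_cancel₀ (three_mul_sq_sub_one_ne_zero hβ) ?_⟩
  simp only [dominantPart, Pi.sub_apply, zero_add] at h0
  rw [add_comm 2 N, add_comm 1 N] at h0
  rw [mul_ofTraces hβ]
  linear_combination h0

lemma ofTraces_shift_mul (hβ : β ^ 3 = β + 1) (u : ℤ × ℤ × ℤ) :
    ofTraces β (u.2.2 - u.1, u.1, u.2.1) * β = ofTraces β u := by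
  apply mul_left_cancel₀ (three_mul_sq_sub_one_ne_zero hβ)
  rw [mul_ofTraces hβ u, ← mul_assoc, mul_ofTraces hβ]
  push_cast
  linear_combination (u.2.2 - u.1 : ℝ) * hβ

lemma exists_ofTraces_eq_of_mul_pow (hβ : β ^ 3 = β + 1) {ξ : ℝ} (N : ℕ) (u : ℤ × ℤ × ℤ)
    (h : ofTraces β u = ξ * β ^ N) : ∃ v, ofTraces β v = ξ := by
  induction N generalizing u with
  | zero => exact ⟨u, by simpa using h⟩
  | succ N ih =>
    have hβ0 : β ≠ 0 := (zero_lt_one.trans (one_lt_of_pow_three_eq hβ)).ne'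
    refine ih (u.2.2 - u.1, u.1, u.2.1) (mul_right_cancel₀ hβ0 ?_)
    rw [ofTraces_shift_mul hβ, h, pow_succ, mul_assoc]

lemma range_ofTraces (hβ : β ^ 3 = β + 1) : Set.range (ofTraces β) = PisotSet β := by
  refine Set.Subset.antisymm (Set.range_subset_iff.mpr (ofTraces_mem_pisotSet hβ)) fun ξ hξ => ?_
  obtain ⟨N, u, hu⟩ := exists_ofTraces_eq_mul_pow hβ hξ
  exact exists_ofTraces_eq_of_mul_pow hβ N u hu

lemma irreducible_X_pow_three_sub_X_sub_one : Irreducible (X ^ 3 - X - 1 : ℤ[X]) := by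
  have hmonic : (X ^ 3 - X - 1 : ℤ[X]).Monic := by monicity!
  have hdeg : (X ^ 3 - X - 1 : ℤ[X]).natDegree = 3 := by compute_degree!
  rw [hmonic.irreducible_iff_roots_eq_zero_of_degree_le_three (by omega) (by omega)]
  refine Multiset.eq_zero_of_forall_notMem fun r hr => ?_
  rw [mem_roots hmonic.ne_zero, IsRoot.def] at hr
  have hr2 : ((r ^ 3 - r - 1 : ℤ) : ZMod 2) = 0 := by
    simpa using congrArg (Int.cast : ℤ → ZMod 2) hr
  push_cast at hr2
  generalize (r : ZMod 2) = t at hr2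
  revert t
  decide

lemma minpoly_eq (hβ : β ^ 3 = β + 1) : minpoly ℤ β = X ^ 3 - X - 1 := by
  have hroot : aeval β (X ^ 3 - X - 1 : ℤ[X]) = 0 := by simp [hβ]
  have hmonic : (X ^ 3 - X - 1 : ℤ[X]).Monic := by monicity!
  have hint : IsIntegral ℤ β := ⟨_, hmonic, by simpa [aeval_def] using hroot⟩
  exact eq_of_monic_of_associated (minpoly.monic hint) hmonic
    ((minpoly.irreducible hint).associated_of_dvd irreducible_X_pow_three_sub_X_sub_one
      (minpoly.isIntegrallyClosed_dvd hint hroot))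

lemma eq_zero_of_add_mul_add_mul_sq_eq_zero (hβ : β ^ 3 = β + 1) {a b c : ℤ}
    (h : a + b * β + c * β ^ 2 = 0) : a = 0 ∧ b = 0 ∧ c = 0 := by
  have hp : C a + C b * X + C c * X ^ 2 = (0 : ℤ[X]) := by
    by_contra hp
    have hdeg := minpoly.IsIntegrallyClosed.degree_le_of_ne_zero (s := β) hp
      (by simpa only [map_add, map_mul, map_intCast, aeval_X, map_pow, eq_intCast])
    have h3 : (X ^ 3 - X - 1 : ℤ[X]).degree = 3 := by compute_degree!
    have h2 : (C a + C b * X + C c * X ^ 2).degree ≤ 2 := by compute_degree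
    rw [minpoly_eq hβ, h3] at hdeg
    exact absurd (hdeg.trans h2) (by decide)
  have hcoeff (n : ℕ) := congrArg (coeff · n) hp
  simp only [coeff_add, coeff_C, coeff_C_mul_X, coeff_C_mul_X_pow, coeff_zero] at hcoeff
  exact ⟨by simpa using hcoeff 0, by simpa using hcoeff 1, by simpa using hcoeff 2⟩

lemma ofTraces_injective (hβ : β ^ 3 = β + 1) : Function.Injective (ofTraces β) := by
  refine (injective_iff_map_eq_zero _).mpr fun ⟨u₀, u₁, u₂⟩ hu => ?_
  have h := mul_ofTraces hβ (u₀, u₁, u₂)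
  rw [hu, mul_zero] at h
  obtain ⟨h₂, h₁, h₀⟩ := eq_zero_of_add_mul_add_mul_sq_eq_zero hβ (a := u₂ - u₀) (b := u₁) (c := u₀)
    (by push_cast; linear_combination -h)
  simp only [Prod.mk_eq_zero]
  omega

lemma mem_closure_singleton_iff (hβ : β ^ 3 = β + 1) (r : ℝ) :
    r ∈ Subring.closure {β} ↔ ∃ a b c : ℤ, a + b * β + c * β ^ 2 = r := by
  refine ⟨fun hr => ?_, ?_⟩
  · induction hr using Subring.closure_induction with
    | mem x hx => exact ⟨0, 1, 0, by rw [Set.mem_singleton_iff.mp hx]; push_cast; ring⟩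
    | zero => exact ⟨0, 0, 0, by push_cast; ring⟩
    | one => exact ⟨1, 0, 0, by push_cast; ring⟩
    | add x y _ _ hx hy =>
      obtain ⟨a, b, c, rfl⟩ := hx
      obtain ⟨d, e, f, rfl⟩ := hy
      exact ⟨a + d, b + e, c + f, by push_cast; ring⟩
    | neg x _ hx =>
      obtain ⟨a, b, c, rfl⟩ := hx
      exact ⟨-a, -b, -c, by push_cast; ring⟩
    | mul x y _ _ hx hy =>
      obtain ⟨a, b, c, rfl⟩ := hx
      obtain ⟨d, e, f, rfl⟩ := hy
      refine ⟨a * d + b * f + c * e, a * e + b * d + b * f + c * e + c * f,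
        a * f + b * e + c * d + c * f, ?_⟩
      push_cast
      linear_combination (-(b * f + c * e : ℝ) - c * f * β) * hβ
  · rintro ⟨a, b, c, rfl⟩
    have hβmem : β ∈ Subring.closure {β} := Subring.subset_closure rfl
    exact add_mem (add_mem (intCast_mem _ a) (mul_mem (intCast_mem _ b) hβmem))
      (mul_mem (intCast_mem _ c) (pow_mem hβmem 2))

/-- `(Tr ξ, Tr ξβ, Tr ξβ²)` for `ξ = a + bβ + cβ²`, from `Tr βᵏ = 3, 0, 2, 3, 2` for `k = 0, …, 4`.
Its matrix has determinant `-23`, the discriminant of `x³ - x - 1`. -/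
def traces (a b c : ℤ) : ℤ × ℤ × ℤ := (3 * a + 2 * c, 2 * b + 3 * c, 2 * a + 3 * b + 2 * c)

lemma ofTraces_traces (hβ : β ^ 3 = β + 1) (a b c : ℤ) :
    ofTraces β (traces a b c) = a + b * β + c * β ^ 2 := by
  refine mul_left_cancel₀ (three_mul_sq_sub_one_ne_zero hβ) ?_
  rw [mul_ofTraces hβ]
  simp only [traces]
  push_cast
  linear_combination (-3 * b - 3 * c * β : ℝ) * hβ

/-- `(3, 1, 7)` spans the left kernel of the matrix of `traces` modulo `23`. -/
def traceResidue : ℤ × ℤ × ℤ →+ ZMod 23 :=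
  AddMonoidHom.mk' (fun u => ((3 * u.1 + u.2.1 + 7 * u.2.2 : ℤ) : ZMod 23))
    fun u v => by simp only [Prod.fst_add, Prod.snd_add]; push_cast; ring

lemma traceResidue_surjective : Function.Surjective traceResidue := fun t =>
  ⟨(0, t.val, 0), by simp [traceResidue]⟩

lemma exists_traces_eq_iff (u : ℤ × ℤ × ℤ) :
    (∃ a b c, traces a b c = u) ↔ traceResidue u = 0 := by
  obtain ⟨u₀, u₁, u₂⟩ := u
  simp only [traceResidue, AddMonoidHom.mk'_apply, ZMod.intCast_zmod_eq_zero_iff_dvd]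
  constructor
  · rintro ⟨a, b, c, h⟩
    simp only [traces, Prod.mk.injEq] at h
    exact ⟨a + b + c, by omega⟩
  · rintro ⟨k, hk⟩
    exact ⟨u₀ + 2 * u₂ - 6 * k, u₂ - 2 * k, 2 * u₀ + u₁ + 4 * u₂ - 14 * k, by
      simp only [traces, Prod.mk.injEq]; omega⟩

lemma ofTraces_mem_closure_iff (hβ : β ^ 3 = β + 1) (u : ℤ × ℤ × ℤ) :
    ofTraces β u ∈ Subring.closure {β} ↔ traceResidue u = 0 := by
  simp only [mem_closure_singleton_iff hβ, ← exists_traces_eq_iff, ← ofTraces_traces hβ,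
    (ofTraces_injective hβ).eq_iff]

end SmallestPisot

open SmallestPisot

/-- for the smallest Pisot number `β` (the real root of `x³ = x + 1`),
the Pisot group `A_β = P_β/ℤ[β]` is cyclic of order `23 = |D(β)|`, i.e. isomorphic
to `ℤ/23ℤ`. -/
theorem smallest_pisot_group (β : ℝ) (hβ : β ^ 3 = β + 1)
    (P : AddSubgroup ℝ) (hP : (P : Set ℝ) = PisotSet β)
    (Z : AddSubgroup ℝ) (hZ : (Z : Set ℝ) = (Subring.closure ({β} : Set ℝ) : Set ℝ)) :
    Nonempty ((↥P ⧸ Z.addSubgroupOf P) ≃+ ZMod 23) ∧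
    Nat.card (↥P ⧸ Z.addSubgroupOf P) = 23 := by
  have hrange : (ofTraces β).range = P :=
    SetLike.ext' (by rw [AddMonoidHom.coe_range, hP, range_ofTraces hβ])
  let e : (ℤ × ℤ × ℤ) ≃+ P :=
    (AddMonoidHom.ofInjective (ofTraces_injective hβ)).trans (AddEquiv.addSubgroupCongr hrange)
  have he : ∀ u, (e u : ℝ) = ofTraces β u := fun u => rfl
  let Φ : P →+ ZMod 23 := traceResidue.comp e.symm.toAddMonoidHom
  have hker : Φ.ker = Z.addSubgroupOf P := by
    ext p
    rw [AddMonoidHom.mem_ker, AddSubgroup.mem_addSubgroupOf, ← SetLike.mem_coe, hZ,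
      SetLike.mem_coe]
    show traceResidue (e.symm p) = 0 ↔ _
    rw [← ofTraces_mem_closure_iff hβ, ← he, e.apply_symm_apply]
  have hΦ : Function.Surjective Φ := traceResidue_surjective.comp e.symm.surjective
  let A := (QuotientAddGroup.quotientAddEquivOfEq hker.symm).trans
    (QuotientAddGroup.quotientKerEquivOfSurjective Φ hΦ)
  exact ⟨⟨A⟩, by rw [Nat.card_congr A.toEquiv, Nat.card_zmod]⟩
end

section
/- Let β be the positive real root of x⁴ = x³ + 1 (the second smallest Pisot number, a Pisot unit). Then x₀ := β^{−2} + β^{−3} satisfies x₀ ∈ ℤ[β], 0 < x₀ < 1, and the identity β^{−2} + β^{−3} = Σ_{j=0}^∞ β^{−(5j+1)} holds; moreover T_βⁿ(x₀) ≠ 0 for every n ≥ 0, so x₀ ∈ ℤ[β] ∩ [0,1) has an infinite β-expansion and β is not finitary: Fin(β) ≠ ℤ[β] ∩ [0,1). -/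
/-!
Write `x₀ = β⁻² + β⁻³`. Since `β x₀ = β⁻¹ + β⁻² ∈ [1, 2)`, the relation `β⁴ = β³ + 1` gives
`T_β x₀ = β⁻¹ + β⁻² - 1 = β⁻⁴ x₀`, and on the points `β⁻ᵏ x₀` with `k ≥ 1` the map `T_β` is plain
multiplication by `β`. So the orbit of `x₀` stays in `{β⁻ᵏ x₀ | k ∈ ℕ}` (it is periodic of period
`5`), which does not contain `0`, while `x₀ = (β³ - β²)² + (β³ - β²)³ ∈ ℤ[β]`.
-/

noncomputable def betaMap (β : ℝ) (x : ℝ) : ℝ := β * x - (⌊β * x⌋ : ℤ)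

/-- `Fin(β)`. -/
def finExpSet (β : ℝ) : Set ℝ :=
  {x : ℝ | x ∈ Set.Ico (0 : ℝ) 1 ∧ ∃ n : ℕ, (betaMap β)^[n] x = 0}

open Set

theorem betaMap_eq_sub_of_mem_Ico {β x : ℝ} (m : ℤ) (h : β * x ∈ Ico (m : ℝ) (m + 1)) :
    betaMap β x = β * x - m := by
  rw [betaMap, Int.floor_eq_iff.mpr h]

theorem betaMap_inv_pow_succ_mul {β x : ℝ} (hβ : 1 ≤ β) (hx : x ∈ Ico (0 : ℝ) 1) (k : ℕ) :
    betaMap β ((β ^ (k + 1))⁻¹ * x) = (β ^ k)⁻¹ * x := by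
  have hβ0 : 0 < β := zero_lt_one.trans_le hβ
  have hmul : β * ((β ^ (k + 1))⁻¹ * x) = (β ^ k)⁻¹ * x := by
    field_simp
    ring
  have hpow : 1 ≤ β ^ k := one_le_pow₀ hβ
  have hlt : (β ^ k)⁻¹ * x < 1 :=
    calc (β ^ k)⁻¹ * x ≤ x := mul_le_of_le_one_left hx.1 (inv_le_one_of_one_le₀ hpow)
      _ < 1 := hx.2
  rw [betaMap_eq_sub_of_mem_Ico 0 ?_, hmul, Int.cast_zero, sub_zero]
  rw [hmul, Int.cast_zero, zero_add]
  exact ⟨mul_nonneg (by positivity) hx.1, hlt⟩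

theorem finExpSet_ne_of_iterate_ne_zero {β x : ℝ} {S : Set ℝ} (hxS : x ∈ S)
    (hx : x ∈ Ico (0 : ℝ) 1) (horbit : ∀ n : ℕ, (betaMap β)^[n] x ≠ 0) :
    finExpSet β ≠ S ∩ Ico 0 1 := by
  intro h
  obtain ⟨-, n, hn⟩ : x ∈ finExpSet β := h ▸ ⟨hxS, hx⟩
  exact horbit n hn

theorem tsum_inv_pow_mul_add {β : ℝ} (hβ : 1 < β) {p : ℕ} (hp : p ≠ 0) (q : ℕ) :
    ∑' j : ℕ, (β ^ (p * j + q))⁻¹ = (β ^ q)⁻¹ * (1 - (β ^ p)⁻¹)⁻¹ := by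
  have hr : (β ^ p)⁻¹ < 1 := inv_lt_one_of_one_lt₀ (one_lt_pow₀ hβ hp)
  have hterm : ∀ j : ℕ, (β ^ (p * j + q))⁻¹ = (β ^ q)⁻¹ * ((β ^ p)⁻¹) ^ j := fun j => by
    rw [pow_add, pow_mul, mul_inv, inv_pow, mul_comm]
  rw [tsum_congr hterm, tsum_mul_left, tsum_geometric_of_lt_one (by positivity) hr]

section QuarticPisot

variable {β : ℝ}

theorem inv_eq_of_pow_four_eq (hβ : β ^ 4 = β ^ 3 + 1) : β⁻¹ = β ^ 3 - β ^ 2 := by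
  have : β ≠ 0 := by rintro rfl; norm_num at hβ
  field_simp
  linear_combination -hβ

theorem inv_mem_closure_of_pow_four_eq (hβ : β ^ 4 = β ^ 3 + 1) :
    β⁻¹ ∈ Subring.closure ({β} : Set ℝ) := by
  have hβmem : β ∈ Subring.closure ({β} : Set ℝ) := Subring.subset_closure rfl
  rw [inv_eq_of_pow_four_eq hβ]
  exact sub_mem (pow_mem hβmem 3) (pow_mem hβmem 2)

theorem sq_lt_two_of_pow_four_eq (hβ : β ^ 4 = β ^ 3 + 1) (hβ1 : 1 < β) : β ^ 2 < 2 := by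
  nlinarith [mul_pos (sub_pos.mpr hβ1) (sub_pos.mpr hβ1)]

theorem inv_sq_add_inv_cube_lt_one (hβ : β ^ 4 = β ^ 3 + 1) (hβ1 : 1 < β) :
    (β ^ 2)⁻¹ + (β ^ 3)⁻¹ < 1 := by
  have hβ0 : 0 < β := zero_lt_one.trans hβ1
  -- `(β³ - β - 1)(β - 1) = 2 - β²` modulo the quartic relation
  have hcube : β + 1 < β ^ 3 := by
    nlinarith [sq_lt_two_of_pow_four_eq hβ hβ1]
  rw [← sub_pos]
  have : 1 - ((β ^ 2)⁻¹ + (β ^ 3)⁻¹) = (β ^ 3 - β - 1) / β ^ 3 := by field_simp; ring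
  rw [this]
  exact div_pos (by linarith) (by positivity)

theorem betaMap_inv_sq_add_inv_cube (hβ : β ^ 4 = β ^ 3 + 1) (hβ1 : 1 < β) :
    betaMap β ((β ^ 2)⁻¹ + (β ^ 3)⁻¹) = (β ^ 4)⁻¹ * ((β ^ 2)⁻¹ + (β ^ 3)⁻¹) := by
  have hβ0 : 0 < β := zero_lt_one.trans hβ1
  have hmul : β * ((β ^ 2)⁻¹ + (β ^ 3)⁻¹) = β⁻¹ + (β ^ 2)⁻¹ := by field_simp
  have hge : 1 ≤ β⁻¹ + (β ^ 2)⁻¹ := by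
    rw [show β⁻¹ + (β ^ 2)⁻¹ = (β + 1) / β ^ 2 by field_simp, one_le_div (by positivity)]
    nlinarith [sq_lt_two_of_pow_four_eq hβ hβ1]
  have hlt : β⁻¹ + (β ^ 2)⁻¹ < 2 := by
    have h1 : β⁻¹ < 1 := inv_lt_one_of_one_lt₀ hβ1
    have h2 : (β ^ 2)⁻¹ < 1 := inv_lt_one_of_one_lt₀ (one_lt_pow₀ hβ1 two_ne_zero)
    linarith
  rw [betaMap_eq_sub_of_mem_Ico 1 ?_, hmul]
  · field_simp
    linear_combination (-β ^ 3 + β + 1) * hβ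
  rw [hmul, Int.cast_one, one_add_one_eq_two]
  exact ⟨hge, hlt⟩

theorem inv_sq_add_inv_cube_eq_tsum (hβ : β ^ 4 = β ^ 3 + 1) (hβ1 : 1 < β) :
    (β ^ 2)⁻¹ + (β ^ 3)⁻¹ = ∑' j : ℕ, (β ^ (5 * j + 1))⁻¹ := by
  have hβ0 : 0 < β := zero_lt_one.trans hβ1
  have h5 : β ^ 5 - 1 ≠ 0 := (sub_pos.mpr (one_lt_pow₀ hβ1 (by norm_num))).ne'
  rw [tsum_inv_pow_mul_add hβ1 (by norm_num),
    show 1 - (β ^ 5)⁻¹ = (β ^ 5 - 1) / β ^ 5 by field_simp]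
  field_simp
  linear_combination (-β ^ 3 + β + 1) * hβ

theorem iterate_betaMap_inv_sq_add_inv_cube_ne_zero (hβ : β ^ 4 = β ^ 3 + 1) (hβ1 : 1 < β)
    (n : ℕ) : (betaMap β)^[n] ((β ^ 2)⁻¹ + (β ^ 3)⁻¹) ≠ 0 := by
  set x₀ := (β ^ 2)⁻¹ + (β ^ 3)⁻¹
  have hx : x₀ ∈ Ico (0 : ℝ) 1 := ⟨by positivity, inv_sq_add_inv_cube_lt_one hβ hβ1⟩
  have hmaps : MapsTo (betaMap β) (range fun k : ℕ => (β ^ k)⁻¹ * x₀)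
      (range fun k : ℕ => (β ^ k)⁻¹ * x₀) := by
    rintro _ ⟨k, rfl⟩
    cases k with
    | zero => exact ⟨4, by simpa using (betaMap_inv_sq_add_inv_cube hβ hβ1).symm⟩
    | succ k => exact ⟨k, (betaMap_inv_pow_succ_mul hβ1.le hx k).symm⟩
  obtain ⟨k, hk⟩ : (betaMap β)^[n] x₀ ∈ range fun k : ℕ => (β ^ k)⁻¹ * x₀ :=
    hmaps.iterate n ⟨0, by simp⟩
  rw [← hk]
  have hβ0 : 0 < β := zero_lt_one.trans hβ1
  exact (mul_pos (by positivity) (by positivity : 0 < x₀)).ne'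

end QuarticPisot

/-- for the second smallest Pisot number `β` (the real root `> 1` of
`x⁴ = x³ + 1`), the point `x₀ = β⁻² + β⁻³` lies in `ℤ[β] ∩ (0,1)`, satisfies
`β⁻² + β⁻³ = Σ_{j≥0} β^{-(5j+1)}`, and `T_βⁿ(x₀) ≠ 0` for every `n`; hence `β` is
not finitary: `Fin(β) ≠ ℤ[β] ∩ [0,1)`. -/
theorem second_pisot_not_finitary (β : ℝ) (hβ : β ^ 4 = β ^ 3 + 1) (hβ1 : 1 < β) :
    (β ^ 2)⁻¹ + (β ^ 3)⁻¹ ∈ Subring.closure ({β} : Set ℝ) ∧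
    0 < (β ^ 2)⁻¹ + (β ^ 3)⁻¹ ∧ (β ^ 2)⁻¹ + (β ^ 3)⁻¹ < 1 ∧
    (β ^ 2)⁻¹ + (β ^ 3)⁻¹ = ∑' j : ℕ, (β ^ (5 * j + 1))⁻¹ ∧
    (∀ n : ℕ, (betaMap β)^[n] ((β ^ 2)⁻¹ + (β ^ 3)⁻¹) ≠ 0) ∧
    finExpSet β ≠ (Subring.closure ({β} : Set ℝ) : Set ℝ) ∩ Set.Ico (0 : ℝ) 1 := by
  have hβ0 : 0 < β := zero_lt_one.trans hβ1
  have hinv := inv_mem_closure_of_pow_four_eq hβ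
  have hmem : (β ^ 2)⁻¹ + (β ^ 3)⁻¹ ∈ Subring.closure ({β} : Set ℝ) := by
    rw [← inv_pow, ← inv_pow]
    exact add_mem (pow_mem hinv 2) (pow_mem hinv 3)
  have hpos : 0 < (β ^ 2)⁻¹ + (β ^ 3)⁻¹ := by positivity
  have hlt := inv_sq_add_inv_cube_lt_one hβ hβ1
  have horbit := iterate_betaMap_inv_sq_add_inv_cube_ne_zero hβ hβ1
  exact ⟨hmem, hpos, hlt, inv_sq_add_inv_cube_eq_tsum hβ hβ1, horbit,
    finExpSet_ne_of_iterate_ne_zero (S := Subring.closure {β}) hmem ⟨hpos.le, hlt⟩ horbit⟩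
end

section
/- Let β = (1+√5)/2 be the golden mean and let (F_n) be the Fibonacci sequence with F₁ = 1, F₂ = 2 and F_{n+2} = F_{n+1} + F_n. Then for every even k ≥ 2, F_k = β^{−k} + Σ_{j=0}^{k/2 − 1} β^{k−1−4j} (exponents k−1, k−5, …, −k+3, together with −k), and for every odd k ≥ 1, F_k = Σ_{j=0}^{(k−1)/2} β^{k−1−4j} (exponents k−1, k−5, …, −k+1). -/
/-!
Multiplying by `√5 = β² - β⁻²` telescopes `∑ j < n, β ^ (e - 4j)` to `β ^ (e + 2) - β ^ (e + 2 - 4n)`.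
Since `F k = fib (k + 1)`, Binet's formula with `ψ = -β⁻¹` gives
`√5 F k = β ^ (k + 1) - (-1) ^ (k + 1) β ^ (-(k + 1))`. For odd `k` this is the telescoped sum
itself; for even `k` the two sides differ by `β ^ (-k - 1) + β ^ (-k + 1) = √5 β ^ (-k)`.
-/

open Finset Real
open scoped goldenRatio

theorem eq_fib_succ_of_recurrence {F : ℕ → ℕ} (h1 : F 1 = 1) (h2 : F 2 = 2)
    (hrec : ∀ n, 1 ≤ n → F (n + 2) = F (n + 1) + F n) {k : ℕ} (hk : 1 ≤ k) :
    F k = Nat.fib (k + 1) := by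
  suffices h : ∀ n, F (n + 1) = Nat.fib (n + 2) ∧ F (n + 2) = Nat.fib (n + 3) by
    obtain ⟨n, rfl⟩ := Nat.exists_eq_add_of_le' hk
    exact (h n).1
  intro n
  induction n with
  | zero => exact ⟨h1, h2⟩
  | succ n ih =>
    refine ⟨ih.2, ?_⟩
    rw [hrec (n + 1) n.succ_pos, ih.1, ih.2, Nat.fib_add_two (n := n + 2)]
    ring

theorem zpow_sub_zpow_neg_mul_sum_range {K : Type*} [Field K] {x : K} (hx : x ≠ 0)
    (d e : ℤ) (n : ℕ) :
    (x ^ d - x ^ (-d)) * ∑ j ∈ range n, x ^ (e - 2 * d * j) =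
      x ^ (e + d) - x ^ (e + d - 2 * d * n) := by
  rw [mul_sum]
  convert sum_range_sub' (fun j : ℕ ↦ x ^ (e + d - 2 * d * j)) n using 2 with j
  · rw [sub_mul, ← zpow_add₀ hx, ← zpow_add₀ hx]
    push_cast
    ring_nf
  · simp

namespace Real

theorem goldenConj_zpow (n : ℤ) : ψ ^ n = (-1) ^ n * φ ^ (-n) := by
  rw [← neg_neg ψ, ← inv_goldenRatio, neg_eq_neg_one_mul, mul_zpow, inv_zpow']

theorem goldenRatio_sq_sub_inv_sq : φ ^ (2 : ℤ) - φ ^ (-2 : ℤ) = √5 := by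
  rw [← inv_zpow', inv_goldenRatio, Even.neg_zpow (by decide)]
  norm_cast
  linear_combination (φ + ψ) * goldenRatio_sub_goldenConj + √5 * goldenRatio_add_goldenConj

theorem goldenRatio_zpow_pred_add_zpow_succ (a : ℤ) :
    φ ^ (a - 1) + φ ^ (a + 1) = √5 * φ ^ a := by
  rw [zpow_sub_one₀ goldenRatio_ne_zero, zpow_add_one₀ goldenRatio_ne_zero, inv_goldenRatio,
    ← goldenRatio_sub_goldenConj]
  ring

theorem sqrt_five_mul_sum_range_goldenRatio_zpow (e : ℤ) (n : ℕ) :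
    √5 * ∑ j ∈ range n, φ ^ (e - 4 * j) = φ ^ (e + 2) - φ ^ (e + 2 - 4 * n) := by
  simpa only [goldenRatio_sq_sub_inv_sq, show (2 : ℤ) * 2 = 4 by norm_num] using
    zpow_sub_zpow_neg_mul_sum_range goldenRatio_ne_zero 2 e n

end Real

/-- for the golden mean `β = (1+√5)/2` and the Fibonacci sequence
`F₁ = 1, F₂ = 2, F_{n+2} = F_{n+1} + F_n`, one has, for even `k ≥ 2`,
`F_k = β^{k-1} + β^{k-5} + ⋯ + β^{-k+3} + β^{-k}`, and for odd `k ≥ 1`,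
`F_k = β^{k-1} + β^{k-5} + ⋯ + β^{-k+1}`. -/
theorem fibonacci_golden_mean_expansions (β : ℝ) (hβ : β = (1 + Real.sqrt 5) / 2)
    (F : ℕ → ℕ) (hF1 : F 1 = 1) (hF2 : F 2 = 2)
    (hFrec : ∀ n : ℕ, 1 ≤ n → F (n + 2) = F (n + 1) + F n) :
    (∀ k : ℕ, 2 ≤ k → Even k →
      (F k : ℝ) = β ^ (-(k : ℤ)) +
        ∑ j ∈ Finset.range (k / 2), β ^ ((k : ℤ) - 1 - 4 * (j : ℤ))) ∧
    (∀ k : ℕ, 1 ≤ k → Odd k →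
      (F k : ℝ) = ∑ j ∈ Finset.range ((k - 1) / 2 + 1), β ^ ((k : ℤ) - 1 - 4 * (j : ℤ))) := by
  obtain rfl : β = φ := hβ
  have binet (k : ℕ) (hk : 1 ≤ k) :
      (F k : ℝ) = (φ ^ ((k : ℤ) + 1) - ψ ^ ((k : ℤ) + 1)) / √5 := by
    rw [eq_fib_succ_of_recurrence hF1 hF2 hFrec hk, coe_fib_eq]
    norm_cast
  have hs5 : √5 ≠ 0 := by positivity
  constructor
  · rintro k hk ⟨m, hm⟩
    have hsum := sqrt_five_mul_sum_range_goldenRatio_zpow ((k : ℤ) - 1) m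
    rw [show (k : ℤ) - 1 + 2 - 4 * m = -k + 1 by omega, show (k : ℤ) - 1 + 2 = k + 1 by ring] at hsum
    have hodd : Odd ((k : ℤ) + 1) := ⟨m, by omega⟩
    rw [binet k (by omega), goldenConj_zpow, hodd.neg_one_zpow, neg_add', div_eq_iff hs5,
      show k / 2 = m by omega]
    linear_combination goldenRatio_zpow_pred_add_zpow_succ (-k) - hsum
  · rintro k hk ⟨m, hm⟩
    have hsum := sqrt_five_mul_sum_range_goldenRatio_zpow ((k : ℤ) - 1) (m + 1)
    rw [show (k : ℤ) - 1 + 2 - 4 * ((m + 1 : ℕ) : ℤ) = -(k + 1) by omega,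
      show (k : ℤ) - 1 + 2 = k + 1 by ring] at hsum
    have heven : Even ((k : ℤ) + 1) := ⟨m + 1, by omega⟩
    rw [binet k hk, goldenConj_zpow, heven.neg_one_zpow, div_eq_iff hs5,
      show (k - 1) / 2 = m by omega]
    linear_combination -hsum
end
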